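/- arXiv:1709.03071 — 9 statements merged into one kernel-verified Lean document; each statement's English description precedes it below -/
import Mathlib

section
/- Let n and d be even positive integers and let k be an odd positive integer. Then there is no k-multiplex in the Cayley table of the d-iterated group Z_n; equivalently, there is no multiset K of k·n elements of the set S = { (x_0, x_1, …, x_d) ∈ (ZMod n)^{d+1} : x_0 + x_1 + … + x_d = 0 } such that for every coordinate j ∈ {0,…,d} and every value v ∈ ZMod n exactly k elements of K (counted with multiplicity) have j-th coordinate equal to v. -/
lemma multiset_sum_eq_sum_count {n : ℕ} [NeZero n] (L : Multiset (ZMod n)) :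
    L.sum = ∑ v : ZMod n, (L.count v) • v := by
  rw [Finset.sum_multiset_count L]
  exact Finset.sum_subset (Finset.subset_univ _) (fun v _ hv => by
    simp [Multiset.count_eq_zero_of_notMem (by simpa using hv)])

lemma map_sum_swap {d : ℕ} {M : Type*} [AddCommMonoid M]
    (K : Multiset (Fin d → M)) :
    (K.map fun x => ∑ j, x j).sum = ∑ j, (K.map fun x => x j).sum := by
  induction K using Multiset.induction_on with
  | empty => simp
  | cons a s ih => simp [ih, Finset.sum_add_distrib]

lemma sum_univ_zmod_eq {n m : ℕ} [NeZero n] (hnm : n = 2 * m) (hm : 0 < m) :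
    (∑ v : ZMod n, v) = -(m : ZMod n) := by
  subst hnm
  have hbij : Function.Bijective (fun i : Fin (2 * m) => ((i : ℕ) : ZMod (2 * m))) := by
    rw [Fintype.bijective_iff_injective_and_card]
    refine ⟨fun i j hij => ?_, by simp⟩
    have hi := ZMod.val_cast_of_lt (n := 2 * m) i.isLt
    have hj := ZMod.val_cast_of_lt (n := 2 * m) j.isLt
    have h := congrArg ZMod.val hij
    simp only at h
    rw [hi, hj] at h
    exact Fin.ext h
  have h1 : (∑ v : ZMod (2 * m), v) = ∑ i : Fin (2 * m), ((i : ℕ) : ZMod (2 * m)) :=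
    (Fintype.sum_bijective _ hbij _ _ (fun _ => rfl)).symm
  have h2 : (∑ i : Fin (2 * m), ((i : ℕ) : ZMod (2 * m)))
      = ((∑ i ∈ Finset.range (2 * m), i : ℕ) : ZMod (2 * m)) := by
    rw [Nat.cast_sum, ← Fin.sum_univ_eq_sum_range]
  have h3 : (∑ i ∈ Finset.range (2 * m), i) = m * (2 * m - 1) := by
    have h := Finset.sum_range_id_mul_two (2 * m)
    have h' : 2 * m * (2 * m - 1) = (m * (2 * m - 1)) * 2 := by ring
    rw [h'] at h
    exact Nat.eq_of_mul_eq_mul_right two_pos h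
  rw [h1, h2, h3]
  have h4 : ((2 * m - 1 : ℕ) : ZMod (2 * m)) = -1 := by
    have : (2 * m - 1) + 1 = 2 * m := by omega
    have h5 : ((2 * m - 1 : ℕ) : ZMod (2 * m)) + 1 = ((2 * m : ℕ) : ZMod (2 * m)) := by
      rw [← Nat.cast_one (R := ZMod (2 * m)), ← Nat.cast_add, this]
    rw [ZMod.natCast_self] at h5
    linear_combination h5
  push_cast
  rw [h4]
  ring

/-- If `n` and `d` are even positive integers and `k` is an odd positive
integer, then there is no `k`-multiplex over the support
`{ x : (ZMod n)^(d+1) | x₀ + x₁ + ⋯ + x_d = 0 }` of the MDS code of the `d`-iterated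
group `Z_n`, i.e. no multiset `K` of `k·n` elements of this set such that for each
coordinate `j` and each value `v ∈ ZMod n` exactly `k` elements of `K` (with
multiplicity) have `j`-th coordinate `v`. -/
theorem no_odd_multiplex_in_iterated_Zn (n d k : ℕ)
    (hn : 0 < n) (hd : 0 < d) (hk : 0 < k)
    (hne : Even n) (hde : Even d) (hko : Odd k) :
    ¬ ∃ K : Multiset (Fin (d + 1) → ZMod n),
        Multiset.card K = k * n ∧
        (∀ x ∈ K, ∑ j, x j = 0) ∧
        (∀ (j : Fin (d + 1)) (v : ZMod n),
          Multiset.card (K.filter (fun x => x j = v)) = k) := by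
  rintro ⟨K, hcard, hzero, hfilt⟩
  haveI : NeZero n := ⟨hn.ne'⟩
  obtain ⟨m, hm⟩ := hne
  have hmn : n = 2 * m := by omega
  have hmpos : 0 < m := by omega
  set S : ZMod n := ∑ v : ZMod n, v with hS
  -- value of S
  have hSval : S = -(m : ZMod n) := sum_univ_zmod_eq hmn hmpos
  have hSne : S ≠ 0 := by
    rw [hSval]
    intro h
    have : (m : ZMod n) = 0 := by linear_combination -h
    rw [ZMod.natCast_eq_zero_iff] at this
    have := Nat.le_of_dvd hmpos this
    omega
  have hS2 : (2 : ℕ) • S = 0 := by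
    have h0 : ((2 * m : ℕ) : ZMod n) = 0 := by rw [← hmn]; exact ZMod.natCast_self n
    rw [hSval, smul_neg, neg_eq_zero, nsmul_eq_mul]
    push_cast at h0
    exact_mod_cast h0
  -- total sum is zero (rows)
  have hT0 : (K.map fun x => ∑ j, x j).sum = 0 :=
    Multiset.sum_eq_zero (fun y hy => by
      obtain ⟨x, hx, rfl⟩ := Multiset.mem_map.mp hy
      exact hzero x hx)
  -- total sum by columns
  have hcol : ∀ j : Fin (d + 1), (K.map fun x => x j).sum = k • S := by
    intro j
    rw [multiset_sum_eq_sum_count]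
    have hcount : ∀ v : ZMod n, (K.map fun x => x j).count v = k := by
      intro v
      rw [Multiset.count_map]
      rw [← hfilt j v]
      congr 1
      exact Multiset.filter_congr (fun x _ => by simp [eq_comm])
    rw [hS, Finset.smul_sum]
    exact Finset.sum_congr rfl (fun v _ => by rw [hcount v])
  have hT : (K.map fun x => ∑ j, x j).sum = ((d + 1) * k) • S := by
    rw [map_sum_swap]
    rw [Finset.sum_congr rfl (fun j _ => hcol j)]
    rw [Finset.sum_const, Finset.card_univ, Fintype.card_fin, smul_smul]
  -- (d+1)*k is odd
  have hodd : Odd ((d + 1) * k) := (hde.add_one).mul hko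
  obtain ⟨t, ht⟩ := hodd
  have h2t : (2 * t) • S = 0 := by
    rw [mul_comm, ← smul_smul, hS2, smul_zero]
  have : ((d + 1) * k) • S = S := by
    rw [ht, add_nsmul, one_nsmul, h2t, zero_add]
  rw [hT, this] at hT0
  exact hSne hT0
end

section
/- Let G be a binary quasigroup of order n with operation * and let k ≥ 1. Then for every even d ≥ 2 there exists a k-multiplex over S_d(G); that is, Per_k(S_d(G)) > 0 for all even d. -/
/-- The left-to-right product `((a₁ * a₂) * ⋯) * a_m` of a list of elements of `Fin n`
under a binary operation `op`, where `e` is returned for the empty list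
(all uses below have nonempty lists). -/
def leftProd {n : ℕ} (op : Fin n → Fin n → Fin n) (e : Fin n) : List (Fin n) → Fin n
  | [] => e
  | a :: l => l.foldl op a

/-- `SdSet op e d` is the support `S_d(G)` of the `d`-dimensional MDS code
`M(G^[d-1])` of the `(d-1)`-iterated quasigroup `G` with operation `op`:
the set of `(x₁, …, x_d)` with `((…((x₁ * x₂) * x₃) * …) * x_d = e`,
where `e` plays the role of the fixed element `1` of `Fin n`. -/
def SdSet {n : ℕ} (op : Fin n → Fin n → Fin n) (e : Fin n) (d : ℕ) :
    Set (Fin d → Fin n) :=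
  {x | leftProd op e (List.ofFn x) = e}

/-- `IsKMultiplex S k K` says that the multiset `K` is a `k`-multiplex over
`S ⊆ (Fin n)^d`: it consists of `k·n` elements of `S` and, for every coordinate `j`
and every symbol `v`, exactly `k` elements of `K` (counted with multiplicity) have
`j`-th coordinate equal to `v`. -/
def IsKMultiplex {n d : ℕ} (S : Set (Fin d → Fin n)) (k : ℕ)
    (K : Multiset (Fin d → Fin n)) : Prop :=
  Multiset.card K = k * n ∧ (∀ x ∈ K, x ∈ S) ∧
    ∀ (j : Fin d) (v : Fin n), Multiset.card (K.filter (fun x => x j = v)) = k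

/-- `Perk S k` is the number of `k`-multiplexes over `S` (the `k`-multipermanent). -/
noncomputable def Perk {n d : ℕ} (S : Set (Fin d → Fin n)) (k : ℕ) : ℕ :=
  Set.ncard {K : Multiset (Fin d → Fin n) | IsKMultiplex S k K}

/-- `perk S k` is the number of `k`-plexes in `S` (`k`-multiplexes without repeated
elements), i.e. the `k`-permanent. -/
noncomputable def perk {n d : ℕ} (S : Set (Fin d → Fin n)) (k : ℕ) : ℕ :=
  Set.ncard {K : Multiset (Fin d → Fin n) | K.Nodup ∧ IsKMultiplex S k K}

/-!
A transversal of `S_d(G)` — a family `a ↦ X a` of points of `S_d(G)` each of whose coordinates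
is a bijective function of `a` — gives a `k`-multiplex by taking every point `k` times.
For `d = 2` take `X a = (a, s a)` with `a * s a = 1`. To pass from `d` to `d + 2`, append
the pair `(a, t a)` with `(1 * a) * t a = 1`: the product of the longer word is again `1`.
The maps `s` and `t` are injective by right cancellation, hence bijective since `Fin n` is finite.
-/

open Function

lemma leftProd_concat {n : ℕ} (op : Fin n → Fin n → Fin n) (e : Fin n) {l : List (Fin n)}
    (hl : l ≠ []) (u : Fin n) : leftProd op e (l.concat u) = op (leftProd op e l) u := by
  obtain ⟨a, l, rfl⟩ := List.exists_cons_of_ne_nil hl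
  simp [leftProd]

lemma pair_mem_sdSet {n : ℕ} {op : Fin n → Fin n → Fin n} {e u v : Fin n} (huv : op u v = e) :
    ![u, v] ∈ SdSet op e 2 := by
  simpa [SdSet, leftProd] using huv

lemma snoc_snoc_mem_sdSet {n d : ℕ} {op : Fin n → Fin n → Fin n} {e : Fin n} (hd : d ≠ 0)
    {x : Fin d → Fin n} (hx : x ∈ SdSet op e d) {u v : Fin n} (huv : op (op e u) v = e) :
    Fin.snoc (Fin.snoc x u : Fin (d + 1) → Fin n) v ∈ SdSet op e (d + 2) := by
  have hne : List.ofFn x ≠ [] := by simpa using hd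
  simp only [SdSet, Set.mem_ofPred_eq, List.ofFn_succ' (Fin.snoc _ v), Fin.snoc_castSucc,
    Fin.snoc_last, List.ofFn_succ' (Fin.snoc x u)] at hx ⊢
  rw [leftProd_concat _ _ (by simp), leftProd_concat _ _ hne, hx, huv]

lemma bijective_snoc_apply {α β : Type*} {d : ℕ} {X : α → Fin d → β} {u : α → β}
    (hX : ∀ j, Bijective fun a => X a j) (hu : Bijective u) (j : Fin (d + 1)) :
    Bijective fun a => (Fin.snoc (X a) (u a) : Fin (d + 1) → β) j := by
  induction j using Fin.lastCases with
  | last => simpa using hu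
  | cast i => simpa using hX i

lemma exists_bijective_forall_op_eq {α : Type*} [Finite α] {op : α → α → α}
    (hleft : ∀ a, Surjective (op a)) (hright : ∀ b, Injective fun x => op x b)
    {f : α → α} (hf : Injective f) (c : α) :
    ∃ s : α → α, Bijective s ∧ ∀ a, op (f a) (s a) = c := by
  choose s hs using fun a => hleft (f a) c
  refine ⟨s, Finite.injective_iff_bijective.mp fun a a' h => hf ?_, hs⟩
  exact hright (s a) ((hs a).trans (h ▸ hs a').symm)

lemma card_filter_eq_one_of_bijective {α β : Type*} [Fintype α] [DecidableEq β] {F : α → β}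
    (hF : Bijective F) (v : β) : (Finset.univ.filter fun a => F a = v).card = 1 := by
  rw [Finset.card_eq_one]
  obtain ⟨a, ha, huniq⟩ := hF.existsUnique v
  exact ⟨a, by ext a'; simpa using ⟨fun h => huniq a' h, fun h => h ▸ ha⟩⟩

lemma isKMultiplex_nsmul_map {n d : ℕ} {S : Set (Fin d → Fin n)} {X : Fin n → Fin d → Fin n}
    (hS : ∀ a, X a ∈ S) (hX : ∀ j, Bijective fun a => X a j) (k : ℕ) :
    IsKMultiplex S k (k • Finset.univ.val.map X) := by
  classical
  refine ⟨by simp, fun x hx => ?_, fun j v => ?_⟩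
  · obtain ⟨a, -, rfl⟩ := Multiset.mem_map.mp (Multiset.mem_of_mem_nsmul hx)
    exact hS a
  · rw [← Multiset.countP_eq_card_filter, Multiset.countP_nsmul, Multiset.countP_map]
    exact (congrArg (k * ·) (card_filter_eq_one_of_bijective (hX j) v)).trans (mul_one k)

lemma Perk_pos_of_isKMultiplex {n d : ℕ} {S : Set (Fin d → Fin n)} {k : ℕ}
    {K : Multiset (Fin d → Fin n)} (hK : IsKMultiplex S k K) : 0 < Perk S k := by
  have hfin : {K | IsKMultiplex S k K}.Finite :=
    (Set.finite_range (Sym.toMultiset : Sym (Fin d → Fin n) (k * n) → _)).subset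
      fun L hL => ⟨⟨L, hL.1⟩, rfl⟩
  exact (Set.ncard_pos hfin).mpr ⟨K, hK⟩

lemma exists_transversal_sdSet {n : ℕ} {op : Fin n → Fin n → Fin n} (e : Fin n)
    (hop : ∀ a, Bijective (op a) ∧ Bijective fun x => op x a) (m : ℕ) :
    ∃ X : Fin n → Fin (2 * m + 2) → Fin n,
      (∀ a, X a ∈ SdSet op e (2 * m + 2)) ∧ ∀ j, Bijective fun a => X a j := by
  have hleft a := (hop a).1.surjective
  have hright b := (hop b).2.injective
  induction m with
  | zero =>
    obtain ⟨s, hs, hs_op⟩ := exists_bijective_forall_op_eq hleft hright injective_id e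
    refine ⟨fun a => ![a, s a], fun a => pair_mem_sdSet (hs_op a), fun j => ?_⟩
    fin_cases j
    · exact bijective_id
    · exact hs
  | succ m ih =>
    obtain ⟨X, hXS, hX⟩ := ih
    obtain ⟨s, hs, hs_op⟩ := exists_bijective_forall_op_eq hleft hright (hop e).1.injective e
    exact ⟨fun a => Fin.snoc (Fin.snoc (X a) a) (s a),
      fun a => snoc_snoc_mem_sdSet (by omega) (hXS a) (hs_op a),
      bijective_snoc_apply (bijective_snoc_apply hX bijective_id) hs⟩

theorem perk_pos_of_even_dim_general {n : ℕ} (op : Fin n → Fin n → Fin n) (e : Fin n)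
    (hop : ∀ a : Fin n, Function.Bijective (op a) ∧ Function.Bijective (fun x => op x a))
    (k : ℕ) :
    ∀ d : ℕ, 2 ≤ d → Even d → 0 < Perk (SdSet op e d) k := by
  intro d hd ⟨r, hr⟩
  obtain ⟨m, rfl⟩ : ∃ m, d = 2 * m + 2 := ⟨r - 1, by omega⟩
  obtain ⟨X, hXS, hX⟩ := exists_transversal_sdSet e hop m
  exact Perk_pos_of_isKMultiplex (isKMultiplex_nsmul_map hXS hX k)

/-- For a binary quasigroup `op` of order `n` and `k ≥ 1`, for every
even `d ≥ 2` there exists a `k`-multiplex over `S_d(G)`, i.e. `Per_k(S_d(G)) > 0`. -/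
theorem perk_pos_of_even_dim {n : ℕ} (op : Fin n → Fin n → Fin n) (e : Fin n)
    (hop : ∀ a : Fin n, Function.Bijective (op a) ∧ Function.Bijective (fun x => op x a))
    (k : ℕ) (hk : 1 ≤ k) :
    ∀ d : ℕ, 2 ≤ d → Even d → 0 < Perk (SdSet op e d) k :=
  perk_pos_of_even_dim_general op e hop k
end

section
/- Let G be a binary quasigroup of order n with operation * and let k ≥ 1. If for some odd d' ≥ 1 we have Per_k(S_{d'}(G)) > 0, then Per_k(S_d(G)) > 0 for all d ≥ d'. -/
section Multiplex

variable {n d : ℕ}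

theorem perk_pos_iff {S : Set (Fin d → Fin n)} {k : ℕ} :
    0 < Perk S k ↔ ∃ K, IsKMultiplex S k K := by
  refine Set.ncard_pos ?_
  refine (Set.finite_range fun s : Sym (Fin d → Fin n) (k * n) => (s : Multiset _)).subset ?_
  rintro K ⟨hcard, -⟩
  exact ⟨⟨K, hcard⟩, rfl⟩

theorem IsKMultiplex.mono {S T : Set (Fin d → Fin n)} {k : ℕ} {K : Multiset (Fin d → Fin n)}
    (hK : IsKMultiplex S k K) (hST : S ⊆ T) : IsKMultiplex T k K :=
  ⟨hK.1, fun x hx => hST (hK.2.1 x hx), hK.2.2⟩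

theorem IsKMultiplex.nsmul {S : Set (Fin d → Fin n)} {K : Multiset (Fin d → Fin n)}
    (hK : IsKMultiplex S 1 K) (k : ℕ) : IsKMultiplex S k (k • K) := by
  refine ⟨?_, fun x hx => hK.2.1 x (Multiset.mem_of_mem_nsmul hx), fun j v => ?_⟩
  · rw [Multiset.card_nsmul, hK.1, one_mul]
  · rw [Multiset.filter_nsmul, Multiset.card_nsmul, hK.2.2, mul_one]

theorem isKMultiplex_map_univ (g : Fin n → Fin d → Fin n)
    (hg : ∀ j, Function.Bijective fun a => g a j) :
    IsKMultiplex (Set.range g) 1 (Finset.univ.val.map g) := by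
  refine ⟨by simp, fun x hx => ?_, fun j v => ?_⟩
  · obtain ⟨a, -, rfl⟩ := Multiset.mem_map.1 hx
    exact ⟨a, rfl⟩
  · have hfilter : (Finset.univ.filter fun a => g a j = v) =
        {(Equiv.ofBijective _ (hg j)).symm v} := by
      ext a
      simp [Equiv.eq_symm_apply]
    rw [Multiset.filter_map, Multiset.card_map]
    exact congrArg Finset.card hfilter |>.trans (Finset.card_singleton _)

theorem IsKMultiplex.exists_append {m k : ℕ} {S : Set (Fin d → Fin n)}
    {T : Set (Fin m → Fin n)}
    {K : Multiset (Fin d → Fin n)} {L : Multiset (Fin m → Fin n)}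
    (hK : IsKMultiplex S k K) (hL : IsKMultiplex T k L) :
    ∃ M, IsKMultiplex (Set.image2 Fin.append S T) k M := by
  have countP_toList {l : ℕ} {U : Set (Fin l → Fin n)} {N : Multiset (Fin l → Fin n)}
      (hN : IsKMultiplex U k N) (i : Fin l) (v : Fin n) :
      N.toList.countP (fun x => x i = v) = k := by
    rw [← hN.2.2 i v, ← Multiset.countP_eq_card_filter, ← Multiset.coe_countP,
      Multiset.coe_toList]
  have hlen : K.toList.length = L.toList.length := by
    rw [Multiset.length_toList, Multiset.length_toList, hK.1, hL.1]
  set Z := K.toList.zip L.toList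
  have hfst : Z.map Prod.fst = K.toList := List.map_fst_zip hlen.le
  have hsnd : Z.map Prod.snd = L.toList := List.map_snd_zip hlen.ge
  refine ⟨↑(Z.map fun p => Fin.append p.1 p.2), ?_, fun x hx => ?_, fun j v => ?_⟩
  · rw [Multiset.coe_card, List.length_map, List.length_zip, ← hlen, min_self,
      Multiset.length_toList, hK.1]
  · obtain ⟨p, hp, rfl⟩ := List.mem_map.1 (Multiset.mem_coe.1 hx)
    exact Set.mem_image2_of_mem (hK.2.1 _ (Multiset.mem_toList.1 (List.of_mem_zip hp).1))
      (hL.2.1 _ (Multiset.mem_toList.1 (List.of_mem_zip hp).2))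
  · rw [← Multiset.countP_eq_card_filter, Multiset.coe_countP, List.countP_map]
    refine Fin.addCases (fun i => ?_) (fun i => ?_) j
    · simp only [Function.comp_def, Fin.append_left]
      rw [← countP_toList hK i v, ← hfst, List.countP_map]
      rfl
    · simp only [Function.comp_def, Fin.append_right]
      rw [← countP_toList hL i v, ← hsnd, List.countP_map]
      rfl

end Multiplex

section Quasigroup

variable {n : ℕ} (op : Fin n → Fin n → Fin n) (e : Fin n)

theorem leftProd_append {l : List (Fin n)} (hl : l ≠ []) (l' : List (Fin n)) :
    leftProd op e (l ++ l') = l'.foldl op (leftProd op e l) := by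
  obtain ⟨a, l, rfl⟩ := List.exists_cons_of_ne_nil hl
  simp only [leftProd, List.cons_append, List.foldl_append]

theorem image2_append_subset_sdSet {d : ℕ} (hd : d ≠ 0) (m : ℕ) :
    Set.image2 Fin.append (SdSet op e d) {y : Fin m → Fin n | (List.ofFn y).foldl op e = e}
      ⊆ SdSet op e (d + m) := by
  rintro _ ⟨x, hx, y, hy, rfl⟩
  have hne : List.ofFn x ≠ [] := by rwa [Ne, List.ofFn_eq_nil_iff]
  simp only [SdSet, Set.mem_ofPred_eq] at hx hy ⊢
  rw [List.ofFn_fin_append, leftProd_append op e hne, hx, hy]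

theorem exists_isKMultiplex_two {f : Fin n → Fin n} (hf : Function.Injective f)
    (hsurj : ∀ a, Function.Surjective (op a)) (hinj : ∀ b, Function.Injective fun x => op x b)
    (k : ℕ) : ∃ K, IsKMultiplex {y : Fin 2 → Fin n | op (f (y 0)) (y 1) = e} k K := by
  choose σ hσ using fun a => hsurj (f a) e
  have hσ_bij : Function.Bijective σ := by
    refine Finite.injective_iff_bijective.1 fun a b hab => hf (hinj (σ a) ?_)
    show op (f a) (σ a) = op (f b) (σ a)
    rw [hσ a, hab, hσ b]
  refine ⟨_, ((isKMultiplex_map_univ (fun a => ![a, σ a]) fun j => ?_).nsmul k).mono ?_⟩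
  · fin_cases j
    exacts [Function.bijective_id, hσ_bij]
  · rintro _ ⟨a, rfl⟩
    exact hσ a

variable (hop : ∀ a : Fin n, Function.Bijective (op a) ∧ Function.Bijective (fun x => op x a))
include hop

theorem perk_sdSet_two_pos (k : ℕ) : 0 < Perk (SdSet op e 2) k := by
  obtain ⟨K, hK⟩ := exists_isKMultiplex_two op e Function.injective_id
    (fun a => (hop a).1.surjective) (fun b => (hop b).2.injective) k
  refine perk_pos_iff.2 ⟨K, hK.mono fun y hy => ?_⟩
  simpa [SdSet, leftProd, List.ofFn_succ] using hy

theorem perk_sdSet_add_two_pos {d k : ℕ} (hd : d ≠ 0) (h : 0 < Perk (SdSet op e d) k) :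
    0 < Perk (SdSet op e (d + 2)) k := by
  obtain ⟨K, hK⟩ := perk_pos_iff.1 h
  obtain ⟨L, hL⟩ := exists_isKMultiplex_two op e (hop e).1.injective
    (fun a => (hop a).1.surjective) (fun b => (hop b).2.injective) k
  obtain ⟨M, hM⟩ := hK.exists_append hL
  refine perk_pos_iff.2 ⟨M, hM.mono ((Set.image2_subset_left fun y hy => ?_).trans
    (image2_append_subset_sdSet op e hd 2))⟩
  simpa [List.ofFn_succ] using hy

theorem perk_sdSet_add_two_mul_pos {d k : ℕ} (hd : d ≠ 0) (h : 0 < Perk (SdSet op e d) k)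
    (m : ℕ) : 0 < Perk (SdSet op e (d + 2 * m)) k := by
  induction m with
  | zero => exact h
  | succ m ih => exact perk_sdSet_add_two_pos op e hop (d := d + 2 * m) (by omega) ih

end Quasigroup

theorem perk_pos_of_odd_dim_general {n : ℕ} (op : Fin n → Fin n → Fin n) (e : Fin n)
    (hop : ∀ a : Fin n, Function.Bijective (op a) ∧ Function.Bijective (fun x => op x a))
    (k : ℕ)
    (d' : ℕ) (hd' : Odd d')
    (hpos : 0 < Perk (SdSet op e d') k) :
    ∀ d : ℕ, d' ≤ d → 0 < Perk (SdSet op e d) k := by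
  intro d hd
  obtain ⟨m, rfl | rfl⟩ : ∃ m, d = d' + 2 * m ∨ d = 2 + 2 * m := by
    obtain ⟨c', rfl⟩ := hd'
    rcases Nat.even_or_odd' d with ⟨c, rfl | rfl⟩
    exacts [⟨c - 1, Or.inr (by omega)⟩, ⟨c - c', Or.inl (by omega)⟩]
  · exact perk_sdSet_add_two_mul_pos op e hop hd'.pos.ne' hpos m
  · exact perk_sdSet_add_two_mul_pos op e hop two_ne_zero (perk_sdSet_two_pos op e hop k) m

/-- For a binary quasigroup `op` of order `n` and `k ≥ 1`, if
`Per_k(S_{d'}(G)) > 0` for some odd `d' ≥ 1`, then `Per_k(S_d(G)) > 0` for all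
`d ≥ d'`. -/
theorem perk_pos_of_odd_dim {n : ℕ} (op : Fin n → Fin n → Fin n) (e : Fin n)
    (hop : ∀ a : Fin n, Function.Bijective (op a) ∧ Function.Bijective (fun x => op x a))
    (k : ℕ) (hk : 1 ≤ k)
    (d' : ℕ) (hd' : Odd d') (hd1 : 1 ≤ d')
    (hpos : 0 < Perk (SdSet op e d') k) :
    ∀ d : ℕ, d' ≤ d → 0 < Perk (SdSet op e d) k :=
  perk_pos_of_odd_dim_general op e hop k d' hd' hpos
end

section
/- Let G be a binary quasigroup of order n with operation *. Then for every odd d ≥ 1 the d-iterated quasigroup G has a transversal, and if for some even d' the d'-iterated quasigroup G has a transversal, then the d-iterated quasigroup G has a transversal for every d ≥ d'. -/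
/-- A transversal of the `d`-iterated quasigroup: a set `T` of `n` elements of
`S_{d+1}(G)` such that in each of the `d+1` coordinates the elements of `T` take
all `n` values. -/
def IsTransversal {n d : ℕ} (S : Set (Fin d → Fin n)) (T : Finset (Fin d → Fin n)) : Prop :=
  T.card = n ∧ (↑T ⊆ S) ∧ ∀ (j : Fin d) (v : Fin n), ∃ x ∈ T, x j = v

/-!
A transversal of `S_{m+1}` is the same as a family of `n` tuples `t i ∈ S_{m+1}`, `i : Fin n`,
each of whose coordinates runs through all of `Fin n`. If the products `p i` of the entries of such
tuples also run through all of `Fin n`, then appending to `t i` the unique `y` with `p i * y = e`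
gives such a family in `S_{m+2}`, since `p ↦ y` is a bijection. This turns the one-entry tuples
`(i)` into a transversal of `S_2`, and a transversal `t` of `S_{m+1}` into one of `S_{m+3}`, through
the tuples `(t i, i)` whose products are `e * i`.
-/

open Finset

lemma leftProd_ofFn_snoc {n m : ℕ} (op : Fin n → Fin n → Fin n) (e : Fin n)
    (x : Fin (m + 1) → Fin n) (a : Fin n) :
    leftProd op e (List.ofFn (Fin.snoc x a)) = op (leftProd op e (List.ofFn x)) a := by
  rw [List.ofFn_succ' (Fin.snoc x a)]
  simp only [Fin.snoc_castSucc, Fin.snoc_last, List.concat_eq_append, List.ofFn_succ,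
    leftProd, List.cons_append, List.foldl_append, List.foldl_cons, List.foldl_nil]

section Transversal

variable {n m : ℕ} {S : Set (Fin (m + 1) → Fin n)}

lemma isTransversal_image_of_surjective {t : Fin n → Fin (m + 1) → Fin n}
    (ht : ∀ j, Function.Surjective fun i => t i j) (hS : ∀ i, t i ∈ S) :
    IsTransversal S (univ.image t) := by
  have ht_inj : Function.Injective t := fun i i' h =>
    Finite.injective_iff_surjective.mpr (ht 0) (congrFun h 0)
  refine ⟨by rw [card_image_of_injective _ ht_inj, card_univ, Fintype.card_fin], ?_, ?_⟩
  · intro x hx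
    obtain ⟨i, -, rfl⟩ := mem_image.mp hx
    exact hS i
  · intro j v
    obtain ⟨i, rfl⟩ := ht j v
    exact ⟨t i, mem_image_of_mem t (mem_univ i), rfl⟩

lemma IsTransversal.exists_surjective {T : Finset (Fin (m + 1) → Fin n)}
    (hT : IsTransversal S T) :
    ∃ t : Fin n → Fin (m + 1) → Fin n, (∀ j, Function.Surjective fun i => t i j) ∧ ∀ i, t i ∈ S := by
  obtain ⟨hcard, hsub, hcover⟩ := hT
  let eT : T ≃ Fin n := T.equivFinOfCardEq hcard
  refine ⟨fun i => eT.symm i, fun j v => ?_, fun i => hsub (eT.symm i).2⟩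
  obtain ⟨x, hx, rfl⟩ := hcover j v
  exact ⟨eT ⟨x, hx⟩, by simp⟩

end Transversal

section Quasigroup

variable {n : ℕ} (op : Fin n → Fin n → Fin n) (e : Fin n)
  (hop : ∀ a : Fin n, Function.Bijective (op a) ∧ Function.Bijective (fun x => op x a))
include hop

lemma exists_transversal_of_leftProd_surjective {m : ℕ} (t : Fin n → Fin (m + 1) → Fin n)
    (ht : ∀ j, Function.Surjective fun i => t i j)
    (hprod : Function.Surjective fun i => leftProd op e (List.ofFn (t i))) :
    ∃ T, IsTransversal (SdSet op e (m + 2)) T := by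
  choose s hs using fun p => (hop p).1.2 e
  have hs_surj : Function.Surjective s := fun y => by
    obtain ⟨p, hp⟩ := (hop y).2.2 e
    exact ⟨p, (hop p).1.1 (hs p ▸ hp.symm)⟩
  refine ⟨_, isTransversal_image_of_surjective (t := fun i => Fin.snoc (t i)
    (s (leftProd op e (List.ofFn (t i))))) (fun j => ?_) fun i => ?_⟩
  · induction j using Fin.lastCases with
    | last =>
      simp only [Fin.snoc_last]
      exact hs_surj.comp hprod
    | cast j => simpa only [Fin.snoc_castSucc] using ht j
  · simp only [SdSet, Set.mem_ofPred_eq, leftProd_ofFn_snoc, hs]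

lemma exists_transversal_sdSet_two : ∃ T, IsTransversal (SdSet op e 2) T :=
  exists_transversal_of_leftProd_surjective op e hop (fun i _ => i)
    (fun _ i => ⟨i, rfl⟩) fun i => ⟨i, rfl⟩

lemma exists_transversal_sdSet_add_two {m : ℕ} (h : ∃ T, IsTransversal (SdSet op e (m + 1)) T) :
    ∃ T, IsTransversal (SdSet op e (m + 3)) T := by
  obtain ⟨T, hT⟩ := h
  obtain ⟨t, ht, htS⟩ := hT.exists_surjective
  refine exists_transversal_of_leftProd_surjective op e hop (fun i => Fin.snoc (t i) i)
    (fun j => ?_) ?_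
  · induction j using Fin.lastCases with
    | last =>
      simp only [Fin.snoc_last]
      exact fun i => ⟨i, rfl⟩
    | cast j => simpa only [Fin.snoc_castSucc] using ht j
  · have hprod : ∀ i, leftProd op e (List.ofFn (t i)) = e := htS
    simpa only [leftProd_ofFn_snoc, hprod] using (hop e).1.2

lemma exists_transversal_sdSet_add_two_mul {m : ℕ}
    (h : ∃ T, IsTransversal (SdSet op e (m + 1)) T) (k : ℕ) :
    ∃ T, IsTransversal (SdSet op e (m + 2 * k + 1)) T := by
  induction k with
  | zero => exact h
  | succ k ih => exact exists_transversal_sdSet_add_two op e hop ih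

end Quasigroup

/-- For every binary quasigroup `op` of order `n`: every odd-iterated
quasigroup has a transversal, and if the `d'`-iterated quasigroup has a transversal
for some even `d'`, then the `d`-iterated quasigroup has a transversal for every
`d ≥ d'`. -/
theorem transversals_of_iterated_quasigroup {n : ℕ} (op : Fin n → Fin n → Fin n) (e : Fin n)
    (hop : ∀ a : Fin n, Function.Bijective (op a) ∧ Function.Bijective (fun x => op x a)) :
    (∀ d : ℕ, Odd d → ∃ T, IsTransversal (SdSet op e (d + 1)) T) ∧
    (∀ d' : ℕ, Even d' → 1 ≤ d' → (∃ T, IsTransversal (SdSet op e (d' + 1)) T) →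
      ∀ d : ℕ, d' ≤ d → ∃ T, IsTransversal (SdSet op e (d + 1)) T) := by
  have hodd : ∀ d : ℕ, Odd d → ∃ T, IsTransversal (SdSet op e (d + 1)) T := by
    rintro _ ⟨k, rfl⟩
    rw [show 2 * k + 1 + 1 = 1 + 2 * k + 1 by omega]
    exact exists_transversal_sdSet_add_two_mul op e hop (exists_transversal_sdSet_two op e hop) k
  refine ⟨hodd, fun d' hd' _ hT d hle => ?_⟩
  rcases Nat.even_or_odd d with hd | hd
  · obtain ⟨k, rfl⟩ : ∃ k, d = d' + 2 * k :=
      ⟨(d - d') / 2, by obtain ⟨a, rfl⟩ := hd'; obtain ⟨b, rfl⟩ := hd; omega⟩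
    exact exists_transversal_sdSet_add_two_mul op e hop hT k
  · exact hodd d hd
end

section
/- Let G be a binary quasigroup of order n with operation *, and for d ≥ 1 let T_d denote the number of transversals of the d-iterated quasigroup G. Then there exists a constant c = c(G,1) > 0 such that T_d / (n!)^{d-1} tends to c as d → ∞, where the limit is taken along the set of those d for which T_d is nonzero. -/
/-- `Tcount op e d` is the number `T_d` of transversals of the `d`-iterated
quasigroup with operation `op`. -/
noncomputable def Tcount {n : ℕ} (op : Fin n → Fin n → Fin n) (e : Fin n) (d : ℕ) : ℕ :=
  Set.ncard {T : Finset (Fin (d + 1) → Fin n) | IsTransversal (SdSet op e (d + 1)) T}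

/-!
Indexing a transversal by its first coordinate turns it into a `d`-tuple of permutations `π`
with `((i * π₁ i) * ⋯) * π_d i = 1` for every `i`, that is, into a walk of length `d` from the
identity to the constant map `1` among the maps `f : Fin n → Fin n`, with a step
`f ↦ (i ↦ f i * σ i)` for each permutation `σ`. Every map has `n!` outgoing steps and, because
right multiplication is bijective, `n!` incoming ones, so `T_d / (n!)^d` is an entry of the
`d`-th power of a doubly stochastic matrix `P`.

For doubly stochastic `P` reachability is symmetric (mass balance), so the states reaching the
target `b` in a multiple of its period `p` form a closed class on which `P ^ p` is primitive.
Doeblin's contraction makes the entries of `(P ^ p) ^ t` converge to a positive limit, and the `d`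
with `(P ^ d) a b ≠ 0` all lie in one residue class modulo `p`.
-/

open Filter Topology Finset

namespace Matrix

variable {ι : Type*} [Fintype ι] [DecidableEq ι]

section RowStochastic

variable {B : Matrix ι ι ℝ} (hB : B ∈ rowStochastic ℝ ι) {w : ι → ℝ} {c : ℝ}
include hB

theorem mulVec_apply_le_of_mem_rowStochastic (h : ∀ x, w x ≤ c) (y : ι) : (B *ᵥ w) y ≤ c :=
  calc (B *ᵥ w) y = ∑ x, B y x * w x := rfl
    _ ≤ ∑ x, B y x * c :=
      sum_le_sum fun x _ => mul_le_mul_of_nonneg_left (h x) (nonneg_of_mem_rowStochastic hB)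
    _ = c := by rw [← sum_mul, sum_row_of_mem_rowStochastic hB, one_mul]

theorem le_mulVec_apply_of_mem_rowStochastic (h : ∀ x, c ≤ w x) (y : ι) : c ≤ (B *ᵥ w) y := by
  simpa [mulVec_neg] using
    mulVec_apply_le_of_mem_rowStochastic hB (w := -w) (c := -c) (fun x => neg_le_neg (h x)) y

theorem mulVec_apply_le_sub_of_mem_rowStochastic (h : ∀ x, w x ≤ c) {y x₀ : ι} {δ : ℝ}
    (hδ : δ ≤ B y x₀) : (B *ᵥ w) y ≤ c - δ * (c - w x₀) := by
  have hgap : c - (B *ᵥ w) y = ∑ x, B y x * (c - w x) := by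
    simp only [mulVec, dotProduct, mul_sub, sum_sub_distrib, ← sum_mul,
      sum_row_of_mem_rowStochastic hB, one_mul]
  have hx₀ : B y x₀ * (c - w x₀) ≤ ∑ x, B y x * (c - w x) :=
    single_le_sum (f := fun x => B y x * (c - w x))
      (fun x _ => mul_nonneg (nonneg_of_mem_rowStochastic hB) (sub_nonneg.2 (h x))) (mem_univ x₀)
  nlinarith [mul_le_mul_of_nonneg_right hδ (sub_nonneg.2 (h x₀))]

end RowStochastic

theorem pow_add_apply_pos {P : Matrix ι ι ℝ} (hP : P ∈ rowStochastic ℝ ι) {i j : ℕ} {u v w : ι}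
    (hi : 0 < (P ^ i) u v) (hj : 0 < (P ^ j) v w) : 0 < (P ^ (i + j)) u w := by
  rw [pow_add, mul_apply]
  refine (mul_pos hi hj).trans_le
    (single_le_sum (f := fun x => (P ^ i) u x * (P ^ j) x w) (fun x _ => ?_) (mem_univ v))
  exact mul_nonneg (nonneg_of_mem_rowStochastic (pow_mem hP i))
    (nonneg_of_mem_rowStochastic (pow_mem hP j))

/-- Doeblin's argument: a positive power of `A` shrinks the oscillation of each column by a
fixed factor, so the column maxima and minima squeeze to a common limit. -/
theorem exists_tendsto_pow_apply_of_pow_pos {A : Matrix ι ι ℝ} (hA : A ∈ rowStochastic ℝ ι)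
    {K : ℕ} (hK : ∀ y x, 0 < (A ^ K) y x) (b : ι) :
    ∃ L > 0, ∀ y, Tendsto (fun t => (A ^ t) y b) atTop (𝓝 L) := by
  have : Nonempty ι := ⟨b⟩
  have hne : (univ : Finset ι).Nonempty := univ_nonempty
  set v : ℕ → ι → ℝ := fun t y => (A ^ t) y b
  have hv : ∀ s t, v (s + t) = A ^ s *ᵥ v t := fun s t => by
    ext y; simp only [v, pow_add, mul_apply, mulVec, dotProduct]
  set M : ℕ → ℝ := fun t => univ.sup' hne (v t)
  set m : ℕ → ℝ := fun t => univ.inf' hne (v t)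
  have hle_M : ∀ t y, v t y ≤ M t := fun t y => le_sup' (v t) (mem_univ y)
  have hm_le : ∀ t y, m t ≤ v t y := fun t y => inf'_le (v t) (mem_univ y)
  have hM : Antitone M := antitone_nat_of_succ_le fun t => sup'_le _ _ fun y _ => by
    rw [add_comm, hv]; exact mulVec_apply_le_of_mem_rowStochastic (pow_mem hA 1) (hle_M t) y
  have hm : Monotone m := monotone_nat_of_le_succ fun t => le_inf' _ _ fun y _ => by
    rw [add_comm, hv]; exact le_mulVec_apply_of_mem_rowStochastic (pow_mem hA 1) (hm_le t) y
  obtain ⟨q, hq⟩ := Finite.exists_min fun q : ι × ι => (A ^ K) q.1 q.2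
  have hcontract : ∀ t, M (t + K) ≤ M t - (A ^ K) q.1 q.2 * (M t - m t) := fun t => by
    obtain ⟨x₀, -, hx₀⟩ := exists_mem_eq_inf' hne (v t)
    refine sup'_le _ _ fun y _ => ?_
    rw [add_comm, hv, show m t = v t x₀ from hx₀]
    exact mulVec_apply_le_sub_of_mem_rowStochastic (pow_mem hA K) (hle_M t) (hq (y, x₀))
  have hmM : ∀ t, m t ≤ M t := fun t => (hm_le t b).trans (hle_M t b)
  have hM_lim := tendsto_atTop_ciInf hM ⟨m 0, fun _ ⟨t, ht⟩ => ht ▸ (hm t.zero_le).trans (hmM t)⟩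
  have hm_lim := tendsto_atTop_ciSup hm ⟨M 0, fun _ ⟨t, ht⟩ => ht ▸ (hmM t).trans (hM t.zero_le)⟩
  have hlim_le : ⨆ t, m t ≤ ⨅ t, M t := le_of_tendsto_of_tendsto' hm_lim hM_lim hmM
  have hlim_ge : ⨅ t, M t ≤ ⨆ t, m t := by
    have := le_of_tendsto_of_tendsto' ((tendsto_add_atTop_iff_nat K).2 hM_lim)
      (hM_lim.sub ((hM_lim.sub hm_lim).const_mul _)) hcontract
    nlinarith [hK q.1 q.2]
  refine ⟨⨆ t, m t, ?_, fun y => ?_⟩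
  · exact ((lt_inf'_iff hne).2 fun y _ => hK y b).trans_le (hm.ge_of_tendsto hm_lim K)
  · exact tendsto_of_tendsto_of_tendsto_of_le_of_le hm_lim (le_antisymm hlim_ge hlim_le ▸ hM_lim)
      (fun t => hm_le t y) (fun t => hle_M t y)

theorem submatrix_pow_of_closed {R : Type*} [Semiring R] (Q : Matrix ι ι R) {C : Set ι}
    [DecidablePred (· ∈ C)] (hC : ∀ y ∈ C, ∀ x ∉ C, Q y x = 0) (t : ℕ) :
    Q.submatrix ((↑) : C → ι) ((↑) : C → ι) ^ t =
      (Q ^ t).submatrix ((↑) : C → ι) ((↑) : C → ι) := by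
  induction t with
  | zero => rw [pow_zero, pow_zero, submatrix_one _ Subtype.val_injective]
  | succ t ih =>
    ext y x
    rw [pow_succ', ih, pow_succ', mul_apply, submatrix_apply, mul_apply,
      ← Fintype.sum_subtype_add_sum_subtype (· ∈ C) fun z => Q y z * (Q ^ t) z x,
      Fintype.sum_eq_zero (fun z : {z // z ∉ C} => Q y z * (Q ^ t) z x)
        fun z => by rw [hC y y.2 z z.2, zero_mul], add_zero]
    rfl

theorem submatrix_mem_rowStochastic_of_closed {Q : Matrix ι ι ℝ} (hQ : Q ∈ rowStochastic ℝ ι)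
    {C : Set ι} [DecidablePred (· ∈ C)] (hC : ∀ y ∈ C, ∀ x ∉ C, Q y x = 0) :
    Q.submatrix ((↑) : C → ι) ((↑) : C → ι) ∈ rowStochastic ℝ C := by
  refine mem_rowStochastic_iff_sum.2 ⟨fun y x => nonneg_of_mem_rowStochastic hQ, fun y => ?_⟩
  rw [← sum_row_of_mem_rowStochastic hQ y,
    ← Fintype.sum_subtype_add_sum_subtype (· ∈ C) (Q y),
    Fintype.sum_eq_zero (fun z : {z // z ∉ C} => Q y z) fun z => hC y y.2 z z.2, add_zero]
  rfl

noncomputable def returnPeriod (P : Matrix ι ι ℝ) (b : ι) : ℕ :=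
  Nat.setGcd {d | 0 < (P ^ d) b b}

def cyclicClass (P : Matrix ι ι ℝ) (b : ι) : Set ι :=
  {y | ∃ t, 0 < (P ^ (returnPeriod P b * t)) y b}

theorem returnPeriod_dvd {P : Matrix ι ι ℝ} {b : ι} {d : ℕ} (h : 0 < (P ^ d) b b) :
    returnPeriod P b ∣ d :=
  Nat.setGcd_dvd_of_mem h

theorem eventually_pow_returnPeriod_mul_apply_pos {P : Matrix ι ι ℝ} (hP : P ∈ rowStochastic ℝ ι)
    (b : ι) : ∀ᶠ t in atTop, 0 < (P ^ (returnPeriod P b * t)) b b := by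
  rcases (returnPeriod P b).eq_zero_or_pos with h0 | hpos
  · simp [h0]
  obtain ⟨N, hN⟩ := Nat.exists_mem_closure_of_ge {d | 0 < (P ^ d) b b}
  refine eventually_atTop.2 ⟨N, fun t ht => ?_⟩
  refine AddSubmonoid.closure_induction (fun _ h => h) (by simp)
    (fun _ _ _ _ => pow_add_apply_pos hP) (hN _ ?_ (dvd_mul_right _ t))
  exact ht.trans (Nat.le_mul_of_pos_left t hpos)

section DoublyStochastic

variable {P : Matrix ι ι ℝ} (hP : P ∈ doublyStochastic ℝ ι)
include hP

theorem mem_rowStochastic_of_mem_doublyStochastic : P ∈ rowStochastic ℝ ι :=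
  (mem_doublyStochastic_iff_mem_rowStochastic_and_mem_colStochastic.1 hP).1

theorem pow_apply_pos_iff_ne_zero {d : ℕ} {x y : ι} : 0 < (P ^ d) x y ↔ (P ^ d) x y ≠ 0 :=
  (nonneg_of_mem_doublyStochastic (pow_mem hP d)).lt_iff_ne'

/-- Mass balance: the entries in `R × R` already exhaust the column sums over `R`. -/
theorem apply_eq_zero_of_mem_doublyStochastic {R : Finset ι} (hR : ∀ x ∈ R, ∀ y ∉ R, P x y = 0)
    {x y : ι} (hx : x ∉ R) (hy : y ∈ R) : P x y = 0 := by
  have hnn : ∀ x y, 0 ≤ P x y := fun _ _ => nonneg_of_mem_doublyStochastic hP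
  have hin : ∑ y ∈ R, ∑ x ∈ R, P x y = #R := by
    rw [sum_comm]
    calc ∑ x ∈ R, ∑ y ∈ R, P x y = ∑ x ∈ R, (1 : ℝ) := sum_congr rfl fun x hx => by
          rw [← sum_row_of_mem_doublyStochastic hP x]
          exact sum_subset (subset_univ R) fun y _ hy => hR x hx y hy
      _ = #R := by simp
  have hall : ∑ y ∈ R, ∑ x, P x y = #R := by simp [sum_col_of_mem_doublyStochastic hP]
  have hout : ∑ y ∈ R, ∑ x ∈ univ \ R, P x y = 0 := by
    have := sum_congr rfl fun y (_ : y ∈ R) => sum_sdiff (subset_univ R) (f := fun x => P x y)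
    rw [sum_add_distrib] at this
    linarith
  rw [sum_eq_zero_iff_of_nonneg fun y _ => sum_nonneg fun x _ => hnn x y] at hout
  exact (sum_eq_zero_iff_of_nonneg fun x _ => hnn x y).1 (hout y hy) x
    (mem_sdiff.2 ⟨mem_univ x, hx⟩)

theorem exists_pow_apply_pos_of_pow_apply_pos {d : ℕ} {u v : ι} (h : 0 < (P ^ d) u v) :
    ∃ d', 0 < (P ^ d') v u := by
  classical
  have hrow := mem_rowStochastic_of_mem_doublyStochastic hP
  set R : Finset ι := {x | ∃ k, 0 < (P ^ k) v x}
  have hvR : v ∈ R := mem_filter.2 ⟨mem_univ v, 0, by simp⟩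
  have hR : ∀ x ∈ R, ∀ y ∉ R, (P ^ d) x y = 0 := by
    intro x hx y hy
    obtain ⟨k, hk⟩ := (mem_filter.1 hx).2
    by_contra hxy
    exact hy (mem_filter.2
      ⟨mem_univ y, k + d, pow_add_apply_pos hrow hk ((pow_apply_pos_iff_ne_zero hP).2 hxy)⟩)
  by_contra! hu
  have huR : u ∉ R := fun h => by obtain ⟨k, hk⟩ := (mem_filter.1 h).2; exact not_lt.2 (hu k) hk
  exact h.ne' (apply_eq_zero_of_mem_doublyStochastic (pow_mem hP d) hR huR hvR)

theorem modEq_returnPeriod_of_pow_apply_pos {b y : ι} {k k' : ℕ} (hk : 0 < (P ^ k) y b)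
    (hk' : 0 < (P ^ k') y b) : k ≡ k' [MOD returnPeriod P b] := by
  have hrow := mem_rowStochastic_of_mem_doublyStochastic hP
  obtain ⟨m, hm⟩ := exists_pow_apply_pos_of_pow_apply_pos hP hk
  refine Nat.ModEq.add_left_cancel' m ?_
  exact (Nat.modEq_zero_iff_dvd.2 (returnPeriod_dvd (pow_add_apply_pos hrow hm hk))).trans
    (Nat.modEq_zero_iff_dvd.2 (returnPeriod_dvd (pow_add_apply_pos hrow hm hk'))).symm

theorem returnPeriod_dvd_of_mem_cyclicClass {b y : ι} (hy : y ∈ cyclicClass P b) {k : ℕ}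
    (hk : 0 < (P ^ k) y b) : returnPeriod P b ∣ k := by
  obtain ⟨t, ht⟩ := hy
  exact Nat.modEq_zero_iff_dvd.1 ((modEq_returnPeriod_of_pow_apply_pos hP hk ht).trans
    (Nat.modEq_zero_iff_dvd.2 (dvd_mul_right _ t)))

theorem mem_cyclicClass_of_pow_returnPeriod_apply_pos {b y x : ι} (hy : y ∈ cyclicClass P b)
    (hyx : 0 < (P ^ returnPeriod P b) y x) : x ∈ cyclicClass P b := by
  have hrow := mem_rowStochastic_of_mem_doublyStochastic hP
  obtain ⟨t, ht⟩ := hy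
  obtain ⟨m, hm⟩ := exists_pow_apply_pos_of_pow_apply_pos hP ht
  obtain ⟨k, hk⟩ := exists_pow_apply_pos_of_pow_apply_pos hP (pow_add_apply_pos hrow hm hyx)
  obtain ⟨t', rfl⟩ := (Nat.dvd_add_right (dvd_refl _)).1
    (returnPeriod_dvd_of_mem_cyclicClass hP ⟨t, ht⟩ (pow_add_apply_pos hrow hyx hk))
  exact ⟨t', hk⟩

theorem exists_pow_returnPeriod_mul_apply_pos_of_mem_cyclicClass {b y : ι}
    (hy : y ∈ cyclicClass P b) : ∃ s, 0 < (P ^ (returnPeriod P b * s)) b y := by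
  have hrow := mem_rowStochastic_of_mem_doublyStochastic hP
  obtain ⟨t, ht⟩ := hy
  obtain ⟨k, hk⟩ := exists_pow_apply_pos_of_pow_apply_pos hP ht
  obtain ⟨s, rfl⟩ := (Nat.dvd_add_left (dvd_mul_right _ t)).1
    (returnPeriod_dvd (pow_add_apply_pos hrow hk ht))
  exact ⟨s, hk⟩

theorem eventually_pow_returnPeriod_mul_apply_pos_of_mem_cyclicClass {b y x : ι}
    (hy : y ∈ cyclicClass P b) (hx : x ∈ cyclicClass P b) :
    ∀ᶠ K in atTop, 0 < (P ^ (returnPeriod P b * K)) y x := by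
  have hrow := mem_rowStochastic_of_mem_doublyStochastic hP
  obtain ⟨t, ht⟩ := hy
  obtain ⟨s, hs⟩ := exists_pow_returnPeriod_mul_apply_pos_of_mem_cyclicClass hP hx
  filter_upwards [(tendsto_sub_atTop_nat (t + s)).eventually
    (eventually_pow_returnPeriod_mul_apply_pos hrow b), eventually_ge_atTop (t + s)] with K hK hts
  have hsum : returnPeriod P b * t + returnPeriod P b * (K - (t + s)) + returnPeriod P b * s =
      returnPeriod P b * K := by
    rw [← mul_add, ← mul_add]; congr 1; omega
  exact hsum ▸ pow_add_apply_pos hrow (pow_add_apply_pos hrow ht hK) hs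

theorem exists_tendsto_pow_returnPeriod_mul_apply (b : ι) :
    ∃ ℓ : ι → ℝ, 0 < ℓ b ∧
      ∀ y, Tendsto (fun t => (P ^ (returnPeriod P b * t)) y b) atTop (𝓝 (ℓ y)) := by
  classical
  have hrow := mem_rowStochastic_of_mem_doublyStochastic hP
  set C := cyclicClass P b
  have hb : b ∈ C := ⟨0, by simp⟩
  have hC : ∀ y ∈ C, ∀ x ∉ C, (P ^ returnPeriod P b) y x = 0 := fun y hy x hx => by
    by_contra h
    exact hx (mem_cyclicClass_of_pow_returnPeriod_apply_pos hP hy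
      ((pow_apply_pos_iff_ne_zero hP).2 h))
  obtain ⟨K, hK⟩ := (eventually_all.2 fun y : C => eventually_all.2 fun x : C =>
    eventually_pow_returnPeriod_mul_apply_pos_of_mem_cyclicClass hP y.2 x.2).exists
  obtain ⟨L, hL, hlim⟩ := exists_tendsto_pow_apply_of_pow_pos
    (submatrix_mem_rowStochastic_of_closed (pow_mem hrow _) hC) (K := K)
    (fun y x => by rw [submatrix_pow_of_closed _ hC, ← pow_mul]; exact hK y x) ⟨b, hb⟩
  refine ⟨fun y => if y ∈ C then L else 0, by simpa [hb] using hL, fun y => ?_⟩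
  by_cases hy : y ∈ C
  · simpa [hy, submatrix_pow_of_closed _ hC, ← pow_mul] using hlim ⟨y, hy⟩
  · simp only [hy, if_false]
    refine tendsto_const_nhds.congr fun t => ?_
    by_contra h
    exact hy ⟨t, (pow_apply_pos_iff_ne_zero hP).2 (Ne.symm h)⟩

theorem exists_tendsto_pow_apply_of_mem_doublyStochastic (a b : ι) :
    ∃ c > 0, Tendsto (fun d => (P ^ d) a b) (atTop ⊓ 𝓟 {d | (P ^ d) a b ≠ 0}) (𝓝 c) := by
  have hrow := mem_rowStochastic_of_mem_doublyStochastic hP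
  set S := {d | (P ^ d) a b ≠ 0}
  rcases S.finite_or_infinite with hS | hS
  · refine ⟨1, one_pos, ?_⟩
    rw [inf_principal_eq_bot.2 (Nat.cofinite_eq_atTop ▸ hS.eventually_cofinite_notMem)]
    exact tendsto_bot
  obtain ⟨s₀, hs₀, hs₀_pos⟩ := hS.exists_gt 0
  have hab : 0 < (P ^ s₀) a b := (pow_apply_pos_iff_ne_zero hP).2 hs₀
  have hp : returnPeriod P b ≠ 0 := fun h => by
    obtain ⟨m, hm⟩ := exists_pow_apply_pos_of_pow_apply_pos hP hab
    have := Set.mem_singleton_iff.1 (Nat.setGcd_eq_zero_iff.1 h (pow_add_apply_pos hrow hm hab))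
    omega
  obtain ⟨ℓ, hℓb, hℓ⟩ := exists_tendsto_pow_returnPeriod_mul_apply hP b
  have hlim : Tendsto (fun t => (P ^ (s₀ + returnPeriod P b * t)) a b) atTop
      (𝓝 (∑ y, (P ^ s₀) a y * ℓ y)) := by
    simp_rw [pow_add, mul_apply]
    exact tendsto_finsetSum _ fun y _ => (hℓ y).const_mul _
  have hc : 0 < ∑ y, (P ^ s₀) a y * ℓ y := by
    refine (mul_pos hab hℓb).trans_le (single_le_sum (f := fun y => (P ^ s₀) a y * ℓ y)
      (fun y _ => mul_nonneg (nonneg_of_mem_doublyStochastic (pow_mem hP s₀)) ?_) (mem_univ b))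
    exact ge_of_tendsto' (hℓ y) fun t => nonneg_of_mem_doublyStochastic (pow_mem hP _)
  refine ⟨_, hc, (hlim.comp (((Nat.tendsto_div_const_atTop hp).comp
    (tendsto_sub_atTop_nat s₀)).mono_left inf_le_left)).congr' ?_⟩
  filter_upwards [(eventually_ge_atTop s₀).filter_mono inf_le_left,
    mem_inf_of_right (mem_principal_self S)] with d hd hdS
  have hdvd : returnPeriod P b ∣ d - s₀ := (Nat.modEq_iff_dvd' hd).1
    (modEq_returnPeriod_of_pow_apply_pos hP hab ((pow_apply_pos_iff_ne_zero hP).2 hdS))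
  simp only [Function.comp_apply, Nat.mul_div_cancel' hdvd, Nat.add_sub_cancel' hd]

end DoublyStochastic

theorem exists_tendsto_pow_apply_div_pow {M : Matrix ι ι ℕ} {r : ℕ} (hr : 0 < r)
    (hrow : ∀ i, ∑ j, M i j = r) (hcol : ∀ j, ∑ i, M i j = r) (a b : ι) :
    ∃ c > 0, Tendsto (fun d => ((M ^ d) a b : ℝ) / (r : ℝ) ^ (d - 1))
      (atTop ⊓ 𝓟 {d | (M ^ d) a b ≠ 0}) (𝓝 c) := by
  have hr' : (0 : ℝ) < r := by exact_mod_cast hr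
  set P : Matrix ι ι ℝ := (r : ℝ)⁻¹ • M.map (Nat.castRingHom ℝ)
  have hP : P ∈ doublyStochastic ℝ ι := by
    refine mem_doublyStochastic_iff_sum.2 ⟨fun i j => ?_, fun i => ?_, fun j => ?_⟩
    · simp only [P, smul_apply, map_apply, smul_eq_mul, Nat.coe_castRingHom]
      positivity
    · simp [P, ← mul_sum, ← Nat.cast_sum, hrow, hr'.ne']
    · simp [P, ← mul_sum, ← Nat.cast_sum, hcol, hr'.ne']
  have hPd : ∀ d, (P ^ d) a b = (r : ℝ)⁻¹ ^ d * (M ^ d) a b := fun d => by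
    rw [smul_pow, ← Matrix.map_pow, smul_apply, map_apply, smul_eq_mul, Nat.coe_castRingHom]
  obtain ⟨c, hc, hlim⟩ := exists_tendsto_pow_apply_of_mem_doublyStochastic hP a b
  have hS : {d | (M ^ d) a b ≠ 0} = {d | (P ^ d) a b ≠ 0} := by
    ext d; simp [hPd, hr'.ne']
  refine ⟨r * c, by positivity, hS ▸ (hlim.const_mul _).congr' ?_⟩
  filter_upwards [(eventually_ge_atTop 1).filter_mono inf_le_left] with d hd
  obtain ⟨k, rfl⟩ := Nat.exists_eq_add_of_le' hd
  rw [hPd, Nat.add_sub_cancel, pow_succ, inv_pow]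
  field_simp

end Matrix

open Matrix

section WalkMatrix

variable {α : Type*} [Fintype α] [DecidableEq α]

def walkMatrix (op : α → α → α) : Matrix (α → α) (α → α) ℕ :=
  fun f g => #{σ : Equiv.Perm α | (fun i => op (f i) (σ i)) = g}

theorem sum_row_walkMatrix (op : α → α → α) (f : α → α) :
    ∑ g, walkMatrix op f g = (Fintype.card α).factorial := by
  rw [← Fintype.card_perm, ← card_univ, card_eq_sum_card_fiberwise fun σ _ => mem_univ
    (fun i => op (f i) (σ i))]
  rfl

theorem sum_col_walkMatrix {op : α → α → α} (hop : ∀ a, Function.Bijective fun x => op x a)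
    (g : α → α) : ∑ f, walkMatrix op f g = (Fintype.card α).factorial := by
  simp only [walkMatrix, card_filter]
  rw [sum_comm]
  have hfiber : ∀ σ : Equiv.Perm α,
      ∑ f : α → α, (if (fun i => op (f i) (σ i)) = g then 1 else 0) = 1 := fun σ =>
    ((Equiv.piCongrRight fun i => Equiv.ofBijective _ (hop (σ i))).sum_comp
      fun h => if h = g then 1 else 0).trans (by simp)
  simp [hfiber, Fintype.card_perm]

theorem walkMatrix_pow_apply (op : α → α → α) (d : ℕ) (f g : α → α) :
    (walkMatrix op ^ d) f g =
      #{π : Fin d → Equiv.Perm α | ∀ i, (List.ofFn fun j => π j i).foldl op (f i) = g i} := by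
  induction d generalizing f with
  | zero =>
    simp only [pow_zero, one_apply, funext_iff]
    split_ifs <;> simp [*]
  | succ d ih =>
    rw [pow_succ', mul_apply]
    simp only [ih, walkMatrix, card_filter, sum_mul, ite_mul, one_mul, zero_mul]
    rw [sum_comm]
    simp only [sum_ite_eq, mem_univ, if_true]
    rw [← (Fin.consEquiv fun _ => Equiv.Perm α).sum_comp, Fintype.sum_prod_type]
    simp [List.ofFn_succ, Fin.consEquiv]

end WalkMatrix

section Transversal

variable {n d : ℕ}

def graphTuple (π : Fin d → Equiv.Perm (Fin n)) (i : Fin n) : Fin (d + 1) → Fin n :=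
  Fin.cons i fun j => π j i

theorem graphTuple_injective (π : Fin d → Equiv.Perm (Fin n)) :
    Function.Injective (graphTuple π) :=
  fun _ _ h => congrFun h 0

def graphFinset (π : Fin d → Equiv.Perm (Fin n)) : Finset (Fin (d + 1) → Fin n) :=
  univ.map ⟨graphTuple π, graphTuple_injective π⟩

theorem mem_graphFinset {π : Fin d → Equiv.Perm (Fin n)} {x : Fin (d + 1) → Fin n} :
    x ∈ graphFinset π ↔ ∃ i, graphTuple π i = x := by
  simp [graphFinset]

theorem graphFinset_injective : Function.Injective (graphFinset (n := n) (d := d)) := by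
  intro π π' h
  funext j
  ext i
  have hi : graphTuple π i ∈ graphFinset π' := h ▸ mem_graphFinset.2 ⟨i, rfl⟩
  obtain ⟨i', hi'⟩ := mem_graphFinset.1 hi
  obtain ⟨rfl, hπ⟩ := Fin.cons_inj.1 hi'
  exact congrArg Fin.val (congrFun hπ j).symm

theorem isTransversal_graphFinset {S : Set (Fin (d + 1) → Fin n)}
    {π : Fin d → Equiv.Perm (Fin n)} (hS : ∀ i, graphTuple π i ∈ S) :
    IsTransversal S (graphFinset π) := by
  refine ⟨by simp [graphFinset], fun x hx => ?_, fun j v => ?_⟩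
  · obtain ⟨i, rfl⟩ := mem_graphFinset.1 hx
    exact hS i
  · refine Fin.cases ⟨graphTuple π v, mem_graphFinset.2 ⟨v, rfl⟩, rfl⟩ (fun j => ?_) j
    exact ⟨graphTuple π ((π j).symm v), mem_graphFinset.2 ⟨_, rfl⟩, by simp [graphTuple]⟩

theorem IsTransversal.bijective_eval {S : Set (Fin d → Fin n)} {T : Finset (Fin d → Fin n)}
    (hT : IsTransversal S T) (j : Fin d) : Function.Bijective fun x : T => x.1 j := by
  refine (Fintype.bijective_iff_surjective_and_card _).2 ⟨fun v => ?_, by simp [hT.1]⟩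
  obtain ⟨x, hx, rfl⟩ := hT.2.2 j v
  exact ⟨⟨x, hx⟩, rfl⟩

theorem IsTransversal.exists_graphFinset_eq {S : Set (Fin (d + 1) → Fin n)}
    {T : Finset (Fin (d + 1) → Fin n)} (hT : IsTransversal S T) :
    ∃ π, graphFinset π = T := by
  let e : Fin (d + 1) → (T ≃ Fin n) := fun j => Equiv.ofBijective _ (hT.bijective_eval j)
  refine ⟨fun j => (e 0).symm.trans (e j.succ), Finset.ext fun x => ?_⟩
  have hgraph : ∀ i, graphTuple (fun j => (e 0).symm.trans (e j.succ)) i = ((e 0).symm i).1 :=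
    fun i => funext fun k => Fin.cases ((e 0).apply_symm_apply i).symm (fun _ => rfl) k
  simp only [mem_graphFinset, hgraph]
  refine ⟨fun ⟨i, hi⟩ => hi ▸ ((e 0).symm i).2, fun hx => ⟨x 0, ?_⟩⟩
  rw [show (e 0).symm (x 0) = ⟨x, hx⟩ from (e 0).symm_apply_apply ⟨x, hx⟩]

theorem ncard_setOf_isTransversal (S : Set (Fin (d + 1) → Fin n)) :
    {T | IsTransversal S T}.ncard =
      {π : Fin d → Equiv.Perm (Fin n) | ∀ i, graphTuple π i ∈ S}.ncard := by
  have himage : {T | IsTransversal S T} = graphFinset '' {π | ∀ i, graphTuple π i ∈ S} := by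
    ext T
    refine ⟨fun hT => ?_, fun ⟨π, hπ, hT⟩ => hT ▸ isTransversal_graphFinset hπ⟩
    obtain ⟨π, rfl⟩ := hT.exists_graphFinset_eq
    exact ⟨π, fun i => hT.2.1 (mem_graphFinset.2 ⟨i, rfl⟩), rfl⟩
  rw [himage, Set.ncard_image_of_injective _ graphFinset_injective]

end Transversal

theorem graphTuple_mem_sdSet_iff {n d : ℕ} (op : Fin n → Fin n → Fin n) (e : Fin n)
    (π : Fin d → Equiv.Perm (Fin n)) (i : Fin n) :
    graphTuple π i ∈ SdSet op e (d + 1) ↔ (List.ofFn fun j => π j i).foldl op i = e := by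
  simp [SdSet, leftProd, graphTuple, List.ofFn_succ]

theorem tcount_eq_walkMatrix_pow_apply {n : ℕ} (op : Fin n → Fin n → Fin n) (e : Fin n) (d : ℕ) :
    Tcount op e d = (walkMatrix op ^ d) (fun i => i) (fun _ => e) := by
  simp only [Tcount, ncard_setOf_isTransversal, graphTuple_mem_sdSet_iff, walkMatrix_pow_apply,
    Set.ncard_eq_toFinset_card', Set.toFinset_ofPred]
  congr

open Filter in
/-- For a binary quasigroup `op` of order `n` there is a constant
`c = c(G,1) > 0` such that `T_d / (n!)^(d-1)` tends to `c` as `d → ∞` along the set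
of those `d` for which `T_d ≠ 0`. -/
theorem transversal_asymptotics {n : ℕ} (op : Fin n → Fin n → Fin n) (e : Fin n)
    (hop : ∀ a : Fin n, Function.Bijective (op a) ∧ Function.Bijective (fun x => op x a)) :
    ∃ c : ℝ, 0 < c ∧
      Tendsto (fun d : ℕ => (Tcount op e d : ℝ) / (n.factorial : ℝ) ^ (d - 1))
        (atTop ⊓ 𝓟 {d : ℕ | Tcount op e d ≠ 0})
        (nhds c) := by
  have hrow := sum_row_walkMatrix op
  have hcol := sum_col_walkMatrix fun a => (hop a).2
  rw [Fintype.card_fin] at hrow hcol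
  simp_rw [tcount_eq_walkMatrix_pow_apply]
  exact exists_tendsto_pow_apply_div_pow n.factorial_pos hrow hcol _ _
end

section
/- Let S be a subset of (Fin n)^d and let k ≥ 1. Then the number of k-multiplexes over S is at most ((k·n)! / (k!)^n)^d. -/
/-!
Listing the elements of a `k`-multiplex `K` in some order as `x₀, …, x_{kn-1}` turns each
coordinate `j` into a map `i ↦ xᵢ j` from `Fin (k * n)` to `Fin n` all of whose fibres have
size `k`, and these `d` maps determine `K`. A map with fibres of size `k`, together with an
enumeration of each fibre, is the same as a bijection `Fin n × Fin k ≃ Fin (k * n)`, so there are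
at most `(kn)! / (k!)^n` such maps.
-/

open Nat

def balancedMaps (α β : Type*) (k : ℕ) : Set (α → β) :=
  {f | ∀ b, Nat.card {a // f a = b} = k}

namespace balancedMaps

variable {α β : Type*} {k : ℕ} [Finite α]

noncomputable def glue (f : balancedMaps α β k) (σ : β → Equiv.Perm (Fin k)) : β × Fin k ≃ α :=
  (Equiv.sigmaEquivProd β (Fin k)).symm.trans <|
    (Equiv.sigmaCongrRight fun b => (σ b).trans (Finite.equivFinOfCardEq (f.2 b)).symm).trans
      (Equiv.sigmaFiberEquiv f.1)

lemma glue_apply (f : balancedMaps α β k) (σ : β → Equiv.Perm (Fin k)) (b : β) (m : Fin k) :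
    glue f σ (b, m) = (Finite.equivFinOfCardEq (f.2 b)).symm (σ b m) := rfl

lemma apply_glue (f : balancedMaps α β k) (σ : β → Equiv.Perm (Fin k)) (p : β × Fin k) :
    f.1 (glue f σ p) = p.1 :=
  ((Finite.equivFinOfCardEq (f.2 p.1)).symm (σ p.1 p.2)).2

lemma apply_eq_fst_glue_symm (f : balancedMaps α β k) (σ : β → Equiv.Perm (Fin k)) (a : α) :
    f.1 a = ((glue f σ).symm a).1 := by
  conv_lhs => rw [← (glue f σ).apply_symm_apply a]
  exact apply_glue f σ _

lemma glue_injective :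
    Function.Injective fun x : balancedMaps α β k × (β → Equiv.Perm (Fin k)) => glue x.1 x.2 := by
  rintro ⟨f, σ⟩ ⟨f', σ'⟩ h
  dsimp only at h
  obtain rfl : f = f' := by
    ext a
    rw [apply_eq_fst_glue_symm f σ, apply_eq_fst_glue_symm f' σ', h]
  obtain rfl : σ = σ' := by
    ext b m
    have hbm := congrArg (· (b, m)) h
    simp only [glue_apply] at hbm
    rw [(Finite.equivFinOfCardEq _).symm.injective (Subtype.ext hbm)]
  rfl

end balancedMaps

theorem card_balancedMaps_mul_factorial_pow_le {α β : Type*} [Finite α] [Finite β] (k : ℕ) :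
    Nat.card (balancedMaps α β k) * k ! ^ Nat.card β ≤ (Nat.card α)! := by
  have hcard := Nat.card_le_card_of_injective _
    (balancedMaps.glue_injective (α := α) (β := β) (k := k))
  rw [Nat.card_prod, Nat.card_fun, Nat.card_perm, Nat.card_fin] at hcard
  refine hcard.trans ?_
  rcases isEmpty_or_nonempty (β × Fin k ≃ α) with _ | hne
  · simp
  · obtain ⟨e⟩ := hne
    rw [Nat.card_congr (e.equivCongr (Equiv.refl α)), Nat.card_perm]

lemma Multiset.exists_map_univ_eq {γ : Type*} (K : Multiset γ) {m : ℕ} (h : K.card = m) :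
    ∃ g : Fin m → γ, Finset.univ.val.map g = K := by
  subst h
  refine ⟨fun i => K.toList.get (Fin.cast (by simp) i), ?_⟩
  rw [Fin.univ_val_map]
  conv_rhs => rw [← K.coe_toList]
  exact congrArg _ (List.ext_get (by simp) (by simp))

lemma Multiset.card_filter_map_univ {ι γ : Type*} [Fintype ι] (g : ι → γ) (p : γ → Prop)
    [DecidablePred p] :
    ((Finset.univ.val.map g).filter p).card = Nat.card {i // p (g i)} := by
  classical
  rw [Multiset.filter_map, Multiset.card_map, Nat.card_eq_fintype_card, Fintype.card_subtype]
  rfl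

theorem Perk_le_card_balancedMaps_pow {n d : ℕ} (S : Set (Fin d → Fin n)) (k : ℕ) :
    Perk S k ≤ Nat.card (balancedMaps (Fin (k * n)) (Fin n) k) ^ d := by
  let F : (Fin d → balancedMaps (Fin (k * n)) (Fin n) k) → Multiset (Fin d → Fin n) :=
    fun b => Finset.univ.val.map fun i j => (b j).1 i
  have hrange : {K | IsKMultiplex S k K} ⊆ Set.range F := by
    rintro K ⟨hcard, -, hcount⟩
    obtain ⟨g, rfl⟩ := K.exists_map_univ_eq hcard
    refine ⟨fun j => ⟨fun i => g i j, fun v => ?_⟩, rfl⟩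
    exact (Multiset.card_filter_map_univ g _).symm.trans (hcount j v)
  calc Perk S k ≤ (Set.range F).ncard := Set.ncard_le_ncard hrange (Set.finite_range F)
    _ ≤ Nat.card (Fin d → balancedMaps (Fin (k * n)) (Fin n) k) := by
      rw [← Nat.card_coe_set_eq]; exact Finite.card_range_le F
    _ = _ := by rw [Nat.card_fun, Nat.card_fin]

theorem multiplex_count_upper_bound_general {n d : ℕ} (S : Set (Fin d → Fin n)) (k : ℕ) :
    (Perk S k : ℝ) ≤ (((k * n).factorial : ℝ) / (k.factorial : ℝ) ^ n) ^ d := by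
  have hbalanced : (Nat.card (balancedMaps (Fin (k * n)) (Fin n) k) : ℝ) ≤
      (k * n)! / (k ! : ℝ) ^ n := by
    rw [le_div_iff₀ (by positivity)]
    have := card_balancedMaps_mul_factorial_pow_le (α := Fin (k * n)) (β := Fin n) k
    rw [Nat.card_fin, Nat.card_fin] at this
    exact_mod_cast this
  calc (Perk S k : ℝ) ≤ (Nat.card (balancedMaps (Fin (k * n)) (Fin n) k) : ℝ) ^ d := by
        exact_mod_cast Perk_le_card_balancedMaps_pow S k
    _ ≤ _ := pow_le_pow_left₀ (by positivity) hbalanced d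

/-- For any subset `S` of `(Fin n)^d` and `k ≥ 1`, the number of
`k`-multiplexes over `S` is at most `((kn)!/(k!)^n)^d`. -/
theorem multiplex_count_upper_bound {n d : ℕ} (S : Set (Fin d → Fin n)) (k : ℕ)
    (hk : 1 ≤ k) :
    (Perk S k : ℝ) ≤ (((k * n).factorial : ℝ) / (k.factorial : ℝ) ^ n) ^ d :=
  multiplex_count_upper_bound_general S k
end

section
/- Let S be a subset of (Fin n)^d and let k ≥ 2. Then the number of true k-multiplexes over S (k-multiplexes that contain some element with multiplicity at least 2, i.e., are not k-plexes) is at most ( n · (k·n − 2)! / ((k!)^{n−1} · (k−2)!) )^d. -/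
private lemma exists_rep {α : Type*} [DecidableEq α] {K : Multiset α} (h : ¬ K.Nodup) :
    ∃ x, Multiset.replicate 2 x ≤ K := by
  rw [Multiset.nodup_iff_count_le_one] at h
  push_neg at h
  obtain ⟨x, hx⟩ := h
  exact ⟨x, Multiset.le_count_iff_replicate_le.mp hx⟩

private lemma nat_card_fiber_eq_count {α : Type*} [DecidableEq α] {m : ℕ} (g : Fin m → α)
    (w : α) : Nat.card {i // g i = w} = (↑(List.ofFn g) : Multiset α).count w := by
  classical
  rw [Nat.card_eq_fintype_card, Fintype.card_subtype, ← Fin.univ_val_map,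
    Multiset.count_map]
  rw [Finset.card, Finset.filter_val]
  apply congrArg
  apply Multiset.filter_congr
  intro x _
  exact eq_comm

-- counting lemma
private lemma card_fiber_pattern_mul_le {m n : ℕ} (c : Fin n → ℕ) :
    Nat.card {g : Fin m → Fin n // ∀ w, Nat.card {i // g i = w} = c w} * ∏ w, (c w).factorial
      ≤ m.factorial := by
  classical
  set A := {g : Fin m → Fin n // ∀ w, Nat.card {i // g i = w} = c w} with hA
  rcases isEmpty_or_nonempty A with hE | hNE
  · simp [Nat.card_of_isEmpty]
  · obtain ⟨g₀⟩ := hNE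
    have hex : ∀ g : A, ∃ σ : Equiv.Perm (Fin m), (g₀ : Fin m → Fin n) ∘ σ = (g : Fin m → Fin n) := by
      intro g
      have e : ∀ w, {i // (g : Fin m → Fin n) i = w} ≃ {i // (g₀ : Fin m → Fin n) i = w} := by
        intro w
        apply Fintype.equivOfCardEq
        have h1 := g.2 w
        have h2 := g₀.2 w
        rw [Nat.card_eq_fintype_card] at h1 h2
        rw [h1, h2]
      exact ⟨Equiv.ofFiberEquiv e, funext fun i => Equiv.ofFiberEquiv_map e i⟩
    choose σ hσ using hex
    let Φ : (Σ g : A, {τ : Equiv.Perm (Fin m) // (g : Fin m → Fin n) ∘ τ = (g : Fin m → Fin n)})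
        → Equiv.Perm (Fin m) := fun p => p.2.1.trans (σ p.1)
    have hΦg : ∀ p, (g₀ : Fin m → Fin n) ∘ (Φ p) = (p.1 : Fin m → Fin n) := by
      rintro ⟨g, τ, hτ⟩
      funext i
      have : (g₀ : Fin m → Fin n) (σ g (τ i)) = (g : Fin m → Fin n) (τ i) :=
        congrFun (hσ g) (τ i)
      simpa [Φ, this] using congrFun hτ i
    have hinj : Function.Injective Φ := by
      rintro ⟨g₁, τ₁, h₁⟩ ⟨g₂, τ₂, h₂⟩ h
      have hg : g₁ = g₂ := by
        have := hΦg ⟨g₁, τ₁, h₁⟩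
        rw [h, hΦg ⟨g₂, τ₂, h₂⟩] at this
        exact (Subtype.ext this).symm
      subst hg
      have hτ : τ₁ = τ₂ := by
        apply Equiv.ext
        intro i
        have h' : Φ ⟨g₁, τ₁, h₁⟩ i = Φ ⟨g₁, τ₂, h₂⟩ i := by rw [h]
        simp only [Φ, Equiv.trans_apply] at h'
        exact (σ g₁).injective h'
      subst hτ
      rfl
    have hcard := Nat.card_le_card_of_injective Φ hinj
    have hperm : Nat.card (Equiv.Perm (Fin m)) = m.factorial := by
      rw [Nat.card_eq_fintype_card, Fintype.card_perm, Fintype.card_fin]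
    have hstab : ∀ g : A,
        Nat.card {τ : Equiv.Perm (Fin m) // (g : Fin m → Fin n) ∘ τ = (g : Fin m → Fin n)}
          = ∏ w, (c w).factorial := by
      intro g
      rw [Nat.card_eq_fintype_card, DomMulAct.stabilizer_card]
      refine Finset.prod_congr rfl fun w _ => ?_
      rw [← Nat.card_eq_fintype_card, g.2 w]
    have hsig : Nat.card (Σ g : A, {τ : Equiv.Perm (Fin m) //
        (g : Fin m → Fin n) ∘ τ = (g : Fin m → Fin n)}) = Nat.card A * ∏ w, (c w).factorial := by
      haveI : Fintype A := Fintype.ofFinite A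
      rw [Nat.card_eq_fintype_card, Fintype.card_sigma]
      rw [Finset.sum_congr rfl (fun (g : A) _ =>
        ((Nat.card_eq_fintype_card).symm.trans (hstab g)))]
      rw [Finset.sum_const, Finset.card_univ, smul_eq_mul, Nat.card_eq_fintype_card]
    rw [hsig, hperm] at hcard
    exact hcard

private lemma card_pattern_le (n m k : ℕ) :
    Nat.card {p : Fin n × (Fin m → Fin n) //
        ∀ w, Nat.card {i // p.2 i = w} = if w = p.1 then k - 2 else k}
      * ((k - 2).factorial * k.factorial ^ (n - 1)) ≤ n * m.factorial := by
  classical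
  let e : {p : Fin n × (Fin m → Fin n) //
        ∀ w, Nat.card {i // p.2 i = w} = if w = p.1 then k - 2 else k}
      ≃ Σ v : Fin n, {g : Fin m → Fin n //
        ∀ w, Nat.card {i // g i = w} = if w = v then k - 2 else k} :=
    { toFun := fun p => ⟨p.1.1, p.1.2, p.2⟩
      invFun := fun q => ⟨(q.1, q.2.1), q.2.2⟩
      left_inv := fun p => rfl
      right_inv := fun q => rfl }
  have hprod : ∀ v : Fin n,
      (∏ w, (if w = v then k - 2 else k).factorial) = (k - 2).factorial * k.factorial ^ (n - 1) := by
    intro v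
    rw [← Finset.mul_prod_erase Finset.univ _ (Finset.mem_univ v)]
    congr 1
    · simp
    · rw [Finset.prod_congr rfl (fun w hw => ?_), Finset.prod_const,
        Finset.card_erase_of_mem (Finset.mem_univ v), Finset.card_univ, Fintype.card_fin]
      have hw' : w ≠ v := (Finset.mem_erase.mp hw).1
      simp [hw']
  rw [Nat.card_congr e, Nat.card_eq_fintype_card, Fintype.card_sigma, Finset.sum_mul]
  calc ∑ v : Fin n, Fintype.card {g : Fin m → Fin n //
          ∀ w, Nat.card {i // g i = w} = if w = v then k - 2 else k}
          * ((k - 2).factorial * k.factorial ^ (n - 1))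
      ≤ ∑ _v : Fin n, m.factorial := by
        refine Finset.sum_le_sum fun v _ => ?_
        rw [← hprod v, ← Nat.card_eq_fintype_card]
        exact card_fiber_pattern_mul_le _
    _ = n * m.factorial := by
        rw [Finset.sum_const, Finset.card_univ, Fintype.card_fin, smul_eq_mul]

/-- For any subset `S` of `(Fin n)^d` and `k ≥ 2`, the number of true
`k`-multiplexes over `S` (those with a repeated element, i.e. not `k`-plexes) is at
most `(n · (kn-2)! / ((k!)^(n-1) · (k-2)!))^d`. -/
theorem true_multiplex_count_upper_bound {n d : ℕ} (S : Set (Fin d → Fin n)) (k : ℕ)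
    (hk : 2 ≤ k) :
    ((Set.ncard {K : Multiset (Fin d → Fin n) | IsKMultiplex S k K ∧ ¬ K.Nodup} : ℝ)) ≤
      ((n : ℝ) * ((k * n - 2).factorial : ℝ) /
        ((k.factorial : ℝ) ^ (n - 1) * ((k - 2).factorial : ℝ))) ^ d := by
  classical
  rcases Nat.eq_zero_or_pos n with hn | hn
  · subst hn
    have hempty : {K : Multiset (Fin d → Fin 0) | IsKMultiplex S k K ∧ ¬ K.Nodup} = ∅ := by
      ext K
      simp only [Set.mem_setOf_eq, Set.mem_empty_iff_false, iff_false, not_and, not_not]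
      intro hK
      have h0 : Multiset.card K = 0 := by rw [hK.1, Nat.mul_zero]
      rw [Multiset.card_eq_zero] at h0
      subst h0
      exact Multiset.nodup_zero
    rw [hempty, Set.ncard_empty, Nat.cast_zero]
    positivity
  · set m := k * n - 2 with hm
    set Lset := {K : Multiset (Fin d → Fin n) | IsKMultiplex S k K ∧ ¬ K.Nodup} with hLset
    set z : Fin d → Fin n := fun _ => ⟨0, hn⟩ with hz
    have hex : ∀ K : ↥Lset, ∃ x, Multiset.replicate 2 x ≤ (K : Multiset (Fin d → Fin n)) :=
      fun K => exists_rep K.2.2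
    choose x hx using hex
    set L : ↥Lset → List (Fin d → Fin n) :=
      fun K => ((K : Multiset (Fin d → Fin n)) - Multiset.replicate 2 (x K)).toList with hLdef
    have hL : ∀ K, (↑(L K) : Multiset (Fin d → Fin n))
        = (K : Multiset (Fin d → Fin n)) - Multiset.replicate 2 (x K) :=
      fun K => Multiset.coe_toList _
    have hlen : ∀ K, (L K).length = m := by
      intro K
      have h1 := congrArg Multiset.card (hL K)
      rw [Multiset.coe_card, Multiset.card_sub (hx K), Multiset.card_replicate, K.2.1.1] at h1
      exact h1
    set g : ↥Lset → Fin m → (Fin d → Fin n) := fun K i => (L K).getD i z with hgdef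
    have hofFn : ∀ K, List.ofFn (g K) = L K := by
      intro K
      apply List.ext_getElem
      · rw [List.length_ofFn, hlen K]
      · intro i h1 h2
        rw [List.getElem_ofFn]
        show (L K).getD ((⟨i, _⟩ : Fin m) : ℕ) z = _
        rw [List.getD_eq_getElem _ _ (by simpa using h2)]
    have hcount : ∀ (K : ↥Lset) (j : Fin d) (w : Fin n),
        Nat.card {i : Fin m // g K i j = w} = if w = x K j then k - 2 else k := by
      intro K j w
      have h1 : Nat.card {i : Fin m // g K i j = w}
          = (↑(List.ofFn fun i => g K i j) : Multiset (Fin n)).count w :=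
        nat_card_fiber_eq_count _ _
      have h2 : List.ofFn (fun i => g K i j) = (L K).map (fun y => y j) := by
        rw [← hofFn K, List.map_ofFn]
        rfl
      have hrep : Multiset.card (Multiset.filter (fun a => a j = w)
          (Multiset.replicate 2 (x K))) = if x K j = w then 2 else 0 := by
        rcases eq_or_ne (x K j) w with h | h <;>
          simp [Multiset.replicate_succ, Multiset.filter_cons, Multiset.filter_singleton, h]
      have hKf : Multiset.card (Multiset.filter (fun a => a j = w)
          ((K : Multiset (Fin d → Fin n)) - Multiset.replicate 2 (x K)))
            + (if x K j = w then 2 else 0) = k := by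
        rw [← hrep, ← Multiset.card_add, ← Multiset.filter_add,
          tsub_add_cancel_of_le (hx K)]
        exact K.2.1.2.2 j w
      rw [h1, h2, ← Multiset.map_coe, hL K, Multiset.count_map]
      have hcongr : Multiset.filter (fun a => w = a j)
          ((K : Multiset (Fin d → Fin n)) - Multiset.replicate 2 (x K))
          = Multiset.filter (fun a => a j = w)
          ((K : Multiset (Fin d → Fin n)) - Multiset.replicate 2 (x K)) := by
        apply Multiset.filter_congr
        intro a _
        exact eq_comm
      rw [hcongr]
      rcases eq_or_ne (x K j) w with h | h
      · rw [if_pos h] at hKf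
        rw [if_pos h.symm]
        exact Nat.eq_sub_of_add_eq hKf
      · rw [if_neg h] at hKf
        rw [if_neg (Ne.symm h)]
        simpa using hKf
    set P : (Fin n × (Fin m → Fin n)) → Prop :=
      fun p => ∀ w, Nat.card {i // p.2 i = w} = if w = p.1 then k - 2 else k with hP
    set F : ↥Lset → {f : Fin d → Fin n × (Fin m → Fin n) // ∀ j, P (f j)} :=
      fun K => ⟨fun j => (x K j, fun i => g K i j), fun j w => hcount K j w⟩ with hF
    have hdecode : ∀ K : ↥Lset, (K : Multiset (Fin d → Fin n)) =
        ↑(List.ofFn (fun i : Fin m => fun j => ((F K).1 j).2 i))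
          + Multiset.replicate 2 (fun j => ((F K).1 j).1) := by
      intro K
      have h1 : (fun i : Fin m => fun j => ((F K).1 j).2 i) = g K := by
        funext i j
        rfl
      have h2 : (fun j => ((F K).1 j).1) = x K := rfl
      rw [h1, h2, hofFn K, hL K, tsub_add_cancel_of_le (hx K)]
    have hFinj : Function.Injective F := by
      intro K K' h
      have h' : (F K).1 = (F K').1 := congrArg Subtype.val h
      apply Subtype.ext
      rw [hdecode K, hdecode K', h']
    have step2 : Nat.card ↥Lset
        ≤ Nat.card {f : Fin d → Fin n × (Fin m → Fin n) // ∀ j, P (f j)} :=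
      Nat.card_le_card_of_injective F hFinj
    have step3 : Nat.card {f : Fin d → Fin n × (Fin m → Fin n) // ∀ j, P (f j)}
        = (Nat.card {p : Fin n × (Fin m → Fin n) // P p}) ^ d := by
      rw [Nat.card_congr (Equiv.subtypePiEquivPi), Nat.card_pi, Finset.prod_const,
        Finset.card_univ, Fintype.card_fin]
    have hNineq := card_pattern_le n m k
    have hfacpos : (0 : ℝ) < (k.factorial : ℝ) ^ (n - 1) * ((k - 2).factorial : ℝ) := by
      positivity
    have hNreal : ((Nat.card {p : Fin n × (Fin m → Fin n) // P p} : ℕ) : ℝ)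
        ≤ (n : ℝ) * (m.factorial : ℝ)
          / ((k.factorial : ℝ) ^ (n - 1) * ((k - 2).factorial : ℝ)) := by
      rw [le_div_iff₀ hfacpos]
      calc ((Nat.card {p : Fin n × (Fin m → Fin n) // P p} : ℕ) : ℝ)
          * ((k.factorial : ℝ) ^ (n - 1) * ((k - 2).factorial : ℝ))
          = ((Nat.card {p : Fin n × (Fin m → Fin n) // P p}
              * ((k - 2).factorial * k.factorial ^ (n - 1)) : ℕ) : ℝ) := by
            push_cast
            ring
        _ ≤ ((n * m.factorial : ℕ) : ℝ) := Nat.cast_le.mpr hNineq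
        _ = (n : ℝ) * (m.factorial : ℝ) := by push_cast; ring
    calc ((Set.ncard Lset : ℕ) : ℝ)
        = ((Nat.card ↥Lset : ℕ) : ℝ) := by rw [Nat.card_coe_set_eq]
      _ ≤ (((Nat.card {p : Fin n × (Fin m → Fin n) // P p}) ^ d : ℕ) : ℝ) := by
          exact_mod_cast Nat.cast_le.mpr (step3 ▸ step2)
      _ = ((Nat.card {p : Fin n × (Fin m → Fin n) // P p} : ℕ) : ℝ) ^ d := by push_cast; rfl
      _ ≤ ((n : ℝ) * ((m).factorial : ℝ)
          / ((k.factorial : ℝ) ^ (n - 1) * ((k - 2).factorial : ℝ))) ^ d :=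
          pow_le_pow_left₀ (Nat.cast_nonneg _) hNreal d
end

section
/- Let S be a subset of (Fin n)^d, let k ≥ 1, and let n_1, n_2 ≥ 1 with n_1 + n_2 = n. Then the number of k-multiplexes K over S that admit a partition K = K_1 + K_2 (multiset sum) with |K_1| = k·n_1 and |K_2| = k·n_2 such that for every coordinate j ∈ {1,…,d} the set of j-th coordinate values occurring in K_1 is disjoint from the set of j-th coordinate values occurring in K_2, is at most ( C(n, n_1) · (k·n_1)! · (k·n_2)! / (k!)^n )^d, where C(n, n_1) is the binomial coefficient. -/
section MplexAux

lemma mplex_card_filter_univ {α : Type*} {N : ℕ} (f : Fin N → α) (p : α → Prop)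
    [DecidablePred p] :
    (Finset.univ.filter fun i => p (f i)).card =
      Multiset.card (Multiset.filter p ↑(List.ofFn f)) := by
  rw [← Fin.univ_val_map, Multiset.filter_map, Multiset.card_map]
  rfl

lemma mplex_ofFn_get_cast {α : Type*} (l : List α) {N : ℕ} (e : N = l.length) :
    List.ofFn (fun i : Fin N => l.get (Fin.cast e i)) = l := by
  subst e
  simp

noncomputable def msFn {α : Type*} (s : Multiset α) (N : ℕ) (e : Multiset.card s = N) :
    Fin N → α :=
  fun i => s.toList.get (Fin.cast (by rw [Multiset.length_toList, e]) i)

lemma msFn_spec {α : Type*} (s : Multiset α) (N : ℕ) (e : Multiset.card s = N) :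
    (↑(List.ofFn (msFn s N e)) : Multiset α) = s := by
  unfold msFn
  rw [mplex_ofFn_get_cast, Multiset.coe_toList]

lemma mplex_card_filter_msFn {α : Type*} (s : Multiset α) {N : ℕ}
    (e : Multiset.card s = N) (p : α → Prop) [DecidablePred p] :
    (Finset.univ.filter fun i => p (msFn s N e i)).card = Multiset.card (s.filter p) := by
  rw [mplex_card_filter_univ, msFn_spec]

lemma mplex_card_filter_msFn' {n d : ℕ} (s : Multiset (Fin d → Fin n)) {N : ℕ}
    (e : Multiset.card s = N) (j : Fin d) (v : Fin n) :
    (Finset.univ.filter fun i => msFn s N e i j = v).card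
      = Multiset.card (s.filter fun x => x j = v) :=
  mplex_card_filter_msFn s e (fun x => x j = v)

lemma mplex_sum_card_filter {α γ : Type*} [Fintype γ] [DecidableEq γ]
    (s : Multiset α) (f : α → γ) :
    ∑ v : γ, Multiset.card (s.filter fun x => f x = v) = Multiset.card s := by
  classical
  induction s using Multiset.induction with
  | empty => simp
  | cons a t ih =>
    simp only [Multiset.filter_cons, Multiset.card_add, Finset.sum_add_distrib, ih,
      apply_ite Multiset.card, Multiset.card_singleton, Multiset.card_zero]
    simp [Finset.sum_ite_eq]
    omega

lemma mplex_core {n : ℕ} (k m : ℕ) (a : Finset (Fin n)) (ha : a.card = m) :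
    Fintype.card {f : Fin (k * m) → Fin n //
        ∀ v, (Finset.univ.filter fun i => f i = v).card = if v ∈ a then k else 0}
      * k.factorial ^ m ≤ (k * m).factorial := by
  classical
  set T := {f : Fin (k * m) → Fin n //
      ∀ v, (Finset.univ.filter fun i => f i = v).card = if v ∈ a then k else 0} with hT
  rcases isEmpty_or_nonempty T with h | h
  · simp [Fintype.card_eq_zero]
  have hfib : ∀ (F : T) (v : Fin n), v ∈ a →
      (Finset.univ.filter fun i => F.1 i = v).card = k := by
    intro F v hv; rw [F.2 v, if_pos hv]
  let g : T → ({v // v ∈ a} → Equiv.Perm (Fin k)) → ({v // v ∈ a} × Fin k) → Fin (k * m) :=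
    fun F σ p => ((Finset.univ.filter fun i => F.1 i = p.1.1).orderIsoOfFin
      (hfib F p.1.1 p.1.2) (σ p.1 p.2) : _)
  have hval : ∀ (F : T) σ p, F.1 (g F σ p) = p.1.1 := by
    intro F σ p
    have hm := ((Finset.univ.filter fun i => F.1 i = p.1.1).orderIsoOfFin
      (hfib F p.1.1 p.1.2) (σ p.1 p.2)).2
    exact (Finset.mem_filter.mp hm).2
  have hginj : ∀ F σ, Function.Injective (g F σ) := by
    intro F σ p q hpq
    have h1 : p.1.1 = q.1.1 := by rw [← hval F σ p, ← hval F σ q, hpq]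
    obtain ⟨⟨v, hv⟩, i⟩ := p; obtain ⟨⟨w, hw⟩, jj⟩ := q
    simp only at h1
    subst h1
    have h2 := (σ ⟨v, hv⟩).injective
      (((Finset.univ.filter fun idx => F.1 idx = v).orderIsoOfFin
        (hfib F v hv)).injective (Subtype.coe_injective hpq))
    simp only at h2
    exact Prod.ext rfl h2
  have hcard : Fintype.card ({v // v ∈ a} × Fin k) = Fintype.card (Fin (k * m)) := by
    simp [Fintype.card_coe, ha, Nat.mul_comm]
  have hgbij : ∀ F σ, Function.Bijective (g F σ) := fun F σ =>
    (Fintype.bijective_iff_injective_and_card _).2 ⟨hginj F σ, hcard⟩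
  let Ψ : T × ({v // v ∈ a} → Equiv.Perm (Fin k)) → ({v // v ∈ a} × Fin k ≃ Fin (k * m)) :=
    fun Fσ => Equiv.ofBijective _ (hgbij Fσ.1 Fσ.2)
  have hΨinj : Function.Injective Ψ := by
    rintro ⟨F, σ⟩ ⟨F', σ'⟩ hEq
    have hfun : g F σ = g F' σ' := congrArg (fun e : _ ≃ _ => (e : _ → _)) hEq
    have hF : F = F' := by
      apply Subtype.ext; funext x
      obtain ⟨p, hp⟩ := (hgbij F σ).2 x
      have h1 : F.1 x = p.1.1 := by rw [← hp]; exact hval F σ p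
      have h2 : F'.1 x = p.1.1 := by
        rw [← hp, congrFun hfun p]; exact hval F' σ' p
      rw [h1, h2]
    subst hF
    have hσ : σ = σ' := by
      funext v
      ext i
      have hvi := congrFun hfun (v, i)
      have hkey := ((Finset.univ.filter fun idx => F.1 idx = v.1).orderIsoOfFin
          (hfib F v.1 v.2)).injective (Subtype.coe_injective hvi)
      simp [hkey]
    rw [hσ]
  calc Fintype.card T * k.factorial ^ m
      = Fintype.card (T × ({v // v ∈ a} → Equiv.Perm (Fin k))) := by
        simp [Fintype.card_fun, Fintype.card_perm, Fintype.card_coe, ha]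
    _ ≤ Fintype.card ({v // v ∈ a} × Fin k ≃ Fin (k * m)) :=
        Fintype.card_le_of_injective Ψ hΨinj
    _ = (k * m).factorial := by
        rw [Fintype.card_equiv (Ψ ⟨h.some, fun _ => 1⟩)]
        rw [hcard, Fintype.card_fin]

/- The canonical map sending a disconnected multiplex to the data
(value sets, enumeration of `K₁`, enumeration of `K₂`) in each coordinate. -/
open Classical in
noncomputable def discMap {n d : ℕ} (k n₁ n₂ : ℕ) (v₀ : Fin n)
    (K : Multiset (Fin d → Fin n)) :
    Fin d → Finset (Fin n) × (Fin (k * n₁) → Fin n) × (Fin (k * n₂) → Fin n) :=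
  if h : ∃ K₁ K₂ : Multiset (Fin d → Fin n), K = K₁ + K₂ ∧
      Multiset.card K₁ = k * n₁ ∧ Multiset.card K₂ = k * n₂ ∧
      ∀ j : Fin d, ∀ x ∈ K₁, ∀ y ∈ K₂, x j ≠ y j then
    fun j =>
      (Finset.univ.filter fun v =>
          0 < Multiset.card (h.choose.filter fun x => x j = v),
        fun i => msFn h.choose (k * n₁) h.choose_spec.choose_spec.2.1 i j,
        fun i => msFn h.choose_spec.choose (k * n₂) h.choose_spec.choose_spec.2.2.1 i j)
  else fun _ => (∅, fun _ => v₀, fun _ => v₀)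

end MplexAux

/-- For `S ⊆ (Fin n)^d`, `k ≥ 1` and `n₁, n₂ ≥ 1` with `n₁ + n₂ = n`,
the number of `k`-multiplexes over `S` that split as a multiset sum `K = K₁ + K₂`
with `|K₁| = k·n₁`, `|K₂| = k·n₂` such that in every coordinate the values used by
`K₁` and by `K₂` are disjoint, is at most
`(C(n,n₁) · (k·n₁)! · (k·n₂)! / (k!)^n)^d`. -/
theorem disconnected_multiplex_count_upper_bound {n d : ℕ} (S : Set (Fin d → Fin n))
    (k n₁ n₂ : ℕ) (hk : 1 ≤ k) (hn₁ : 1 ≤ n₁) (hn₂ : 1 ≤ n₂) (hsum : n₁ + n₂ = n) :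
    ((Set.ncard {K : Multiset (Fin d → Fin n) | IsKMultiplex S k K ∧
        ∃ K₁ K₂ : Multiset (Fin d → Fin n), K = K₁ + K₂ ∧
          Multiset.card K₁ = k * n₁ ∧ Multiset.card K₂ = k * n₂ ∧
          ∀ j : Fin d, ∀ x ∈ K₁, ∀ y ∈ K₂, x j ≠ y j} : ℝ)) ≤
      ((n.choose n₁ : ℝ) * ((k * n₁).factorial : ℝ) * ((k * n₂).factorial : ℝ) /
        (k.factorial : ℝ) ^ n) ^ d := by
  simp only [IsKMultiplex]
  classical
  have hn : 0 < n := by omega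
  have v₀ : Fin n := ⟨0, hn⟩
  obtain ⟨G, hG⟩ : ∃ G : Finset (Finset (Fin n) × (Fin (k * n₁) → Fin n) ×
      (Fin (k * n₂) → Fin n)), G =
    Finset.univ.filter (fun t => t.1.card = n₁ ∧
      (∀ v, (Finset.univ.filter fun i => t.2.1 i = v).card = if v ∈ t.1 then k else 0) ∧
      (∀ v, (Finset.univ.filter fun i => t.2.2 i = v).card = if v ∈ t.1ᶜ then k else 0)) :=
    ⟨_, rfl⟩
  -- STEP 1 : the count is at most `G.card ^ d`.
  have step1 : Set.ncard {K : Multiset (Fin d → Fin n) |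
        (Multiset.card K = k * n ∧ (∀ x ∈ K, x ∈ S) ∧
          ∀ (j : Fin d) (v : Fin n), Multiset.card (K.filter (fun x => x j = v)) = k) ∧
        ∃ K₁ K₂ : Multiset (Fin d → Fin n), K = K₁ + K₂ ∧
          Multiset.card K₁ = k * n₁ ∧ Multiset.card K₂ = k * n₂ ∧
          ∀ j : Fin d, ∀ x ∈ K₁, ∀ y ∈ K₂, x j ≠ y j} ≤ G.card ^ d := by
    have hmem : ∀ K ∈ {K : Multiset (Fin d → Fin n) |
        (Multiset.card K = k * n ∧ (∀ x ∈ K, x ∈ S) ∧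
          ∀ (j : Fin d) (v : Fin n), Multiset.card (K.filter (fun x => x j = v)) = k) ∧
        ∃ K₁ K₂ : Multiset (Fin d → Fin n), K = K₁ + K₂ ∧
          Multiset.card K₁ = k * n₁ ∧ Multiset.card K₂ = k * n₂ ∧
          ∀ j : Fin d, ∀ x ∈ K₁, ∀ y ∈ K₂, x j ≠ y j},
        discMap k n₁ n₂ v₀ K ∈ (↑(Fintype.piFinset fun _ : Fin d => G) :
          Set (Fin d → Finset (Fin n) × (Fin (k * n₁) → Fin n) × (Fin (k * n₂) → Fin n))) := by
      intro K hK
      obtain ⟨hmux, hQ⟩ := hK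
      rw [Finset.mem_coe, Fintype.mem_piFinset]
      intro j
      simp only [discMap]
      rw [dif_pos hQ]
      have sp1 : K = hQ.choose + hQ.choose_spec.choose := hQ.choose_spec.choose_spec.1
      have sp2 : Multiset.card hQ.choose = k * n₁ := hQ.choose_spec.choose_spec.2.1
      have sp4 : ∀ j : Fin d, ∀ x ∈ hQ.choose, ∀ y ∈ hQ.choose_spec.choose, x j ≠ y j :=
        hQ.choose_spec.choose_spec.2.2.2
      have hadd : ∀ v : Fin n,
          Multiset.card (hQ.choose.filter fun x => x j = v) +
            Multiset.card (hQ.choose_spec.choose.filter fun x => x j = v) = k := by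
        intro v
        have h := hmux.2.2 j v
        rw [sp1, Multiset.filter_add, Multiset.card_add] at h
        exact h
      have hdisj : ∀ v : Fin n,
          Multiset.card (hQ.choose.filter fun x => x j = v) = 0 ∨
            Multiset.card (hQ.choose_spec.choose.filter fun x => x j = v) = 0 := by
        intro v
        by_contra hcon
        push_neg at hcon
        obtain ⟨x, hx⟩ := Multiset.card_pos_iff_exists_mem.mp (Nat.pos_of_ne_zero hcon.1)
        obtain ⟨y, hy⟩ := Multiset.card_pos_iff_exists_mem.mp (Nat.pos_of_ne_zero hcon.2)
        rw [Multiset.mem_filter] at hx hy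
        exact sp4 j x hx.1 y hy.1 (hx.2.trans hy.2.symm)
      rw [hG, Finset.mem_filter]
      refine ⟨Finset.mem_univ _, ?_, ?_, ?_⟩
      · -- the value set has cardinality n₁
        have hs := mplex_sum_card_filter hQ.choose (fun x : Fin d → Fin n => x j)
        rw [sp2] at hs
        have h1 : (Finset.univ.filter fun v : Fin n =>
            0 < Multiset.card (hQ.choose.filter fun x => x j = v)).card * k = k * n₁ := by
          calc (Finset.univ.filter fun v : Fin n =>
              0 < Multiset.card (hQ.choose.filter fun x => x j = v)).card * k
              = ∑ v : Fin n, (if 0 < Multiset.card (hQ.choose.filter fun x => x j = v)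
                  then k else 0) := by
                rw [Finset.sum_ite, Finset.sum_const, Finset.sum_const_zero, add_zero,
                  smul_eq_mul]
            _ = ∑ v : Fin n, Multiset.card (hQ.choose.filter fun x => x j = v) := by
                apply Finset.sum_congr rfl
                intro v _
                have H := hadd v
                rcases hdisj v with h | h
                · simp [h]
                · have H1 : Multiset.card (hQ.choose.filter fun x => x j = v) = k := by
                    rw [h, add_zero] at H; exact H
                  rw [H1, if_pos (Nat.lt_of_lt_of_le Nat.zero_lt_one hk)]
            _ = k * n₁ := hs
        exact Nat.eq_of_mul_eq_mul_left (Nat.lt_of_lt_of_le Nat.zero_lt_one hk)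
          (by rw [mul_comm] at h1; exact h1)
      · -- K₁ is balanced on the value set
        intro v
        rw [mplex_card_filter_msFn']
        simp only [Finset.mem_filter, Finset.mem_univ, true_and]
        have H := hadd v
        rcases hdisj v with h | h
        · simp [h]
        · have H1 : Multiset.card (hQ.choose.filter fun x => x j = v) = k := by
            rw [h, add_zero] at H; exact H
          rw [H1, if_pos (Nat.lt_of_lt_of_le Nat.zero_lt_one hk)]
      · -- K₂ is balanced on the complement
        intro v
        rw [mplex_card_filter_msFn']
        simp only [Finset.mem_compl, Finset.mem_filter, Finset.mem_univ, true_and]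
        have H := hadd v
        rcases hdisj v with h | h
        · have H1 : Multiset.card (hQ.choose_spec.choose.filter fun x => x j = v) = k := by
            rw [h, zero_add] at H; exact H
          rw [H1, if_pos (by simp [h])]
        · have H1 : Multiset.card (hQ.choose.filter fun x => x j = v) = k := by
            rw [h, add_zero] at H; exact H
          have hpos : 0 < Multiset.card (hQ.choose.filter fun x => x j = v) := by
            rw [H1]; exact Nat.lt_of_lt_of_le Nat.zero_lt_one hk
          rw [h, if_neg (not_not_intro hpos)]
    have hinj : Set.InjOn (discMap k n₁ n₂ v₀) {K : Multiset (Fin d → Fin n) |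
        (Multiset.card K = k * n ∧ (∀ x ∈ K, x ∈ S) ∧
          ∀ (j : Fin d) (v : Fin n), Multiset.card (K.filter (fun x => x j = v)) = k) ∧
        ∃ K₁ K₂ : Multiset (Fin d → Fin n), K = K₁ + K₂ ∧
          Multiset.card K₁ = k * n₁ ∧ Multiset.card K₂ = k * n₂ ∧
          ∀ j : Fin d, ∀ x ∈ K₁, ∀ y ∈ K₂, x j ≠ y j} := by
      intro K hK K' hK' heq
      have hQ := hK.2
      have hQ' := hK'.2
      simp only [discMap] at heq
      rw [dif_pos hQ, dif_pos hQ'] at heq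
      have hfn1 : msFn hQ.choose (k * n₁) hQ.choose_spec.choose_spec.2.1 =
          msFn hQ'.choose (k * n₁) hQ'.choose_spec.choose_spec.2.1 := by
        funext i; funext j
        exact congrFun (congrArg (fun t => t.2.1) (congrFun heq j)) i
      have hfn2 : msFn hQ.choose_spec.choose (k * n₂) hQ.choose_spec.choose_spec.2.2.1 =
          msFn hQ'.choose_spec.choose (k * n₂) hQ'.choose_spec.choose_spec.2.2.1 := by
        funext i; funext j
        exact congrFun (congrArg (fun t => t.2.2) (congrFun heq j)) i
      have h1 : hQ.choose = hQ'.choose := by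
        rw [← msFn_spec hQ.choose (k * n₁) hQ.choose_spec.choose_spec.2.1,
          ← msFn_spec hQ'.choose (k * n₁) hQ'.choose_spec.choose_spec.2.1, hfn1]
      have h2 : hQ.choose_spec.choose = hQ'.choose_spec.choose := by
        rw [← msFn_spec hQ.choose_spec.choose (k * n₂) hQ.choose_spec.choose_spec.2.2.1,
          ← msFn_spec hQ'.choose_spec.choose (k * n₂) hQ'.choose_spec.choose_spec.2.2.1, hfn2]
      calc K = hQ.choose + hQ.choose_spec.choose := hQ.choose_spec.choose_spec.1
        _ = hQ'.choose + hQ'.choose_spec.choose := congrArg₂ (· + ·) h1 h2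
        _ = K' := hQ'.choose_spec.choose_spec.1.symm
    have hfin : (↑(Fintype.piFinset fun _ : Fin d => G) :
        Set (Fin d → Finset (Fin n) × (Fin (k * n₁) → Fin n) × (Fin (k * n₂) → Fin n))).Finite :=
      Finset.finite_toSet _
    have := Set.ncard_le_ncard_of_injOn _ hmem hinj hfin
    rwa [Set.ncard_coe_finset, Fintype.card_piFinset, Finset.prod_const, Finset.card_univ,
      Fintype.card_fin] at this
  -- STEP 2 : the counting bound for `G`.
  have step2 : G.card * k.factorial ^ n ≤
      n.choose n₁ * (k * n₁).factorial * (k * n₂).factorial := by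
    obtain ⟨B₁, hB₁⟩ : ∃ B₁ : Finset (Fin n) → Finset (Fin (k * n₁) → Fin n), B₁ = fun a =>
      Finset.univ.filter fun g =>
        ∀ v, (Finset.univ.filter fun i => g i = v).card = if v ∈ a then k else 0 := ⟨_, rfl⟩
    obtain ⟨B₂, hB₂⟩ : ∃ B₂ : Finset (Fin n) → Finset (Fin (k * n₂) → Fin n), B₂ = fun a =>
      Finset.univ.filter fun g =>
        ∀ v, (Finset.univ.filter fun i => g i = v).card = if v ∈ aᶜ then k else 0 := ⟨_, rfl⟩
    have hsub : G ⊆ (Finset.powersetCard n₁ (Finset.univ : Finset (Fin n))).biUnion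
        fun a => {a} ×ˢ (B₁ a ×ˢ B₂ a) := by
      intro t ht
      rw [hG, Finset.mem_filter] at ht
      obtain ⟨-, h1, h2, h3⟩ := ht
      rw [Finset.mem_biUnion]
      refine ⟨t.1, ?_, ?_⟩
      · rw [Finset.mem_powersetCard]; exact ⟨Finset.subset_univ _, h1⟩
      · refine Finset.mem_product.mpr ⟨Finset.mem_singleton_self _,
          Finset.mem_product.mpr ⟨?_, ?_⟩⟩
        · simp only [hB₁]
          exact Finset.mem_filter.mpr ⟨Finset.mem_univ _, h2⟩
        · simp only [hB₂]
          exact Finset.mem_filter.mpr ⟨Finset.mem_univ _, h3⟩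
    have hcompl : ∀ a : Finset (Fin n), a ∈ Finset.powersetCard n₁ (Finset.univ : Finset (Fin n)) →
        (aᶜ).card = n₂ := by
      intro a ha
      rw [Finset.mem_powersetCard] at ha
      rw [Finset.card_compl, Fintype.card_fin, ha.2, ← hsum]
      exact Nat.add_sub_cancel_left n₁ n₂
    calc G.card * k.factorial ^ n
        ≤ (∑ a ∈ Finset.powersetCard n₁ (Finset.univ : Finset (Fin n)),
            ({a} ×ˢ (B₁ a ×ˢ B₂ a)).card) * k.factorial ^ n :=
          Nat.mul_le_mul_right _ ((Finset.card_le_card hsub).trans Finset.card_biUnion_le)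
      _ = ∑ a ∈ Finset.powersetCard n₁ (Finset.univ : Finset (Fin n)),
            ((B₁ a).card * k.factorial ^ n₁) * ((B₂ a).card * k.factorial ^ n₂) := by
          rw [Finset.sum_mul]
          apply Finset.sum_congr rfl
          intro a _
          have hpow : k.factorial ^ n = k.factorial ^ n₁ * k.factorial ^ n₂ := by
            rw [← pow_add, hsum]
          rw [Finset.card_product, Finset.card_product, Finset.card_singleton, hpow]
          ring
      _ ≤ ∑ a ∈ Finset.powersetCard n₁ (Finset.univ : Finset (Fin n)),
            (k * n₁).factorial * (k * n₂).factorial := by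
          apply Finset.sum_le_sum
          intro a ha
          have ha1 : a.card = n₁ := (Finset.mem_powersetCard.mp ha).2
          have hc₁ := mplex_core k n₁ a ha1
          have hc₂ := mplex_core k n₂ (aᶜ) (hcompl a ha)
          rw [Fintype.card_subtype] at hc₁ hc₂
          simp only [hB₁, hB₂]
          exact Nat.mul_le_mul hc₁ hc₂
      _ = n.choose n₁ * (k * n₁).factorial * (k * n₂).factorial := by
          rw [Finset.sum_const, smul_eq_mul, Finset.card_powersetCard, Finset.card_univ,
            Fintype.card_fin, mul_assoc]
  -- STEP 3 : conclude over the reals.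
  have hbase : (G.card : ℝ) ≤ ((n.choose n₁ : ℝ) * ((k * n₁).factorial : ℝ) *
      ((k * n₂).factorial : ℝ)) / ((k.factorial : ℝ)) ^ n := by
    rw [le_div_iff₀ (by positivity)]
    exact_mod_cast step2
  calc (Set.ncard {K : Multiset (Fin d → Fin n) |
        (Multiset.card K = k * n ∧ (∀ x ∈ K, x ∈ S) ∧
          ∀ (j : Fin d) (v : Fin n), Multiset.card (K.filter (fun x => x j = v)) = k) ∧
        ∃ K₁ K₂ : Multiset (Fin d → Fin n), K = K₁ + K₂ ∧
          Multiset.card K₁ = k * n₁ ∧ Multiset.card K₂ = k * n₂ ∧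
          ∀ j : Fin d, ∀ x ∈ K₁, ∀ y ∈ K₂, x j ≠ y j} : ℝ)
      ≤ ((G.card : ℝ)) ^ d := by exact_mod_cast step1
    _ ≤ (((n.choose n₁ : ℝ) * ((k * n₁).factorial : ℝ) * ((k * n₂).factorial : ℝ)) /
        ((k.factorial : ℝ)) ^ n) ^ d := by
        exact pow_le_pow_left₀ (by positivity) hbase d
end

section
/- Let G be a binary quasigroup of order n with operation *, let k ≥ 1, and let 1 ≤ l ≤ n. Then for every even d ≥ 2 there exists a partial k-multiplex of length l over S_d(G), and if for some odd d' there exists a partial k-multiplex of length l over S_{d'}(G), then one exists over S_d(G) for every d ≥ d'. -/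
/-- `IsPartialKMultiplex S k l K` says that the multiset `K` is a partial
`k`-multiplex of length `l` over `S ⊆ (Fin n)^d`: it consists of `k·l` elements of
`S` and, for every coordinate `j` and every symbol `v`, the number of elements of
`K` (counted with multiplicity) with `j`-th coordinate equal to `v` is either `k`
or `0`. -/
def IsPartialKMultiplex {n d : ℕ} (S : Set (Fin d → Fin n)) (k l : ℕ)
    (K : Multiset (Fin d → Fin n)) : Prop :=
  Multiset.card K = k * l ∧ (∀ x ∈ K, x ∈ S) ∧
    ∀ (j : Fin d) (v : Fin n),
      Multiset.card (K.filter (fun x => x j = v)) = k ∨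
      Multiset.card (K.filter (fun x => x j = v)) = 0

lemma aux_filter_nsmul {α : Type*} (p : α → Prop) [DecidablePred p] (k : ℕ) (s : Multiset α) :
    (k • s).filter p = k • s.filter p := by
  induction k with
  | zero => simp
  | succ m ih => simp [succ_nsmul, Multiset.filter_add, ih]

lemma aux_ofFn_snoc {α : Type*} {m : ℕ} (g : Fin m → α) (a : α) :
    List.ofFn (Fin.snoc g a) = List.ofFn g ++ [a] := by
  rw [List.ofFn_succ' (Fin.snoc g a)]
  simp [Fin.snoc_castSucc, Fin.snoc_last, List.concat_eq_append]

lemma aux_leftProd_concat {n : ℕ} (op : Fin n → Fin n → Fin n) (e : Fin n)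
    (a : Fin n) (L : List (Fin n)) (y : Fin n) :
    leftProd op e ((a :: L) ++ [y]) = op (leftProd op e (a :: L)) y := by
  simp [leftProd, List.foldl_append]

/-- The key step: a partial multiplex over `S_d` yields one over `S_{d+2}`, for `d ≥ 1`. -/
lemma aux_step {n : ℕ} (op : Fin n → Fin n → Fin n) (e : Fin n)
    (hop : ∀ a : Fin n, Function.Bijective (op a) ∧ Function.Bijective (fun x => op x a))
    (k l m : ℕ)
    (K : Multiset (Fin (m + 1) → Fin n)) (hK : IsPartialKMultiplex (SdSet op e (m + 1)) k l K) :
    ∃ K', IsPartialKMultiplex (SdSet op e (m + 1 + 2)) k l K' := by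
  classical
  obtain ⟨hcard, hmem, hcols⟩ := hK
  -- h a = the unique z with (e * a) * z = e
  set h : Fin n → Fin n := fun a => (Equiv.ofBijective _ (hop (op e a)).1).symm e with hh
  have hprop : ∀ a, op (op e a) (h a) = e := fun a =>
    (Equiv.ofBijective _ (hop (op e a)).1).apply_symm_apply e
  have hinj : Function.Injective h := by
    intro a b hab
    have h1 : op (op e a) (h a) = op (op e b) (h a) := by
      rw [hprop a, hab, hprop b]
    have h2 : op e a = op e b := (hop (h a)).2.1 h1
    exact (hop e).1.1 h2
  have hsurj : Function.Surjective h := Finite.surjective_of_injective hinj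
  set F : (Fin (m + 1) → Fin n) → (Fin (m + 1 + 2) → Fin n) :=
    fun x => Fin.snoc (Fin.snoc x (x 0)) (h (x 0)) with hF
  have hFcast : ∀ (x : Fin (m+1) → Fin n) (i : Fin (m+1)),
      F x (i.castSucc.castSucc) = x i := by
    intro x i
    simp [hF, Fin.snoc_castSucc]
  have hFmid : ∀ (x : Fin (m+1) → Fin n), F x ((Fin.last (m+1)).castSucc) = x 0 := by
    intro x
    simp [hF, Fin.snoc_castSucc, Fin.snoc_last]
  have hFlast : ∀ (x : Fin (m+1) → Fin n), F x (Fin.last (m+2)) = h (x 0) := by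
    intro x
    simp [hF, Fin.snoc_last]
  refine ⟨K.map F, ?_, ?_, ?_⟩
  · simp [hcard]
  · intro y hy
    obtain ⟨x, hx, rfl⟩ := Multiset.mem_map.1 hy
    have hxS : leftProd op e (List.ofFn x) = e := hmem x hx
    have hofn : List.ofFn (F x) = List.ofFn x ++ [x 0, h (x 0)] := by
      rw [hF]
      rw [aux_ofFn_snoc, aux_ofFn_snoc]
      simp
    show leftProd op e (List.ofFn (F x)) = e
    obtain ⟨a, L, hL⟩ : ∃ a L, List.ofFn x = a :: L := by
      refine ⟨x 0, (List.ofFn x).tail, ?_⟩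
      rw [List.ofFn_succ]
      simp
    have hfold : L.foldl op a = e := by
      have := hxS; rw [hL] at this; simpa [leftProd] using this
    rw [hofn, hL]
    show (L ++ [x 0, h (x 0)]).foldl op a = e
    rw [List.foldl_append, hfold]
    simpa using hprop (x 0)
  · intro j v
    rw [Multiset.filter_map, Multiset.card_map]
    refine Fin.lastCases ?_ (fun j' => ?_) j
    · -- j = last : coordinate value h (x 0)
      obtain ⟨w, rfl⟩ := hsurj v
      have : (K.filter ((fun x => x (Fin.last (m+2)) = h w) ∘ F)) =
          K.filter (fun x => x 0 = w) := by
        apply Multiset.filter_congr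
        intro x _
        simp only [Function.comp, hFlast]
        exact ⟨fun hw => hinj hw, fun hw => by rw [hw]⟩
      rw [this]
      exact hcols 0 w
    · refine Fin.lastCases ?_ (fun i => ?_) j'
      · -- middle new coordinate: value x 0
        have : (K.filter ((fun x => x ((Fin.last (m+1)).castSucc) = v) ∘ F)) =
            K.filter (fun x => x 0 = v) := by
          apply Multiset.filter_congr
          intro x _
          simp only [Function.comp, hFmid]
        rw [this]
        exact hcols 0 v
      · have : (K.filter ((fun x => x (i.castSucc.castSucc) = v) ∘ F)) =
            K.filter (fun x => x i = v) := by
          apply Multiset.filter_congr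
          intro x _
          simp only [Function.comp, hFcast]
        rw [this]
        exact hcols i v

/-- Base case `d = 2`. -/
lemma aux_base {n : ℕ} (op : Fin n → Fin n → Fin n) (e : Fin n)
    (hop : ∀ a : Fin n, Function.Bijective (op a) ∧ Function.Bijective (fun x => op x a))
    (k l : ℕ) (hln : l ≤ n) :
    ∃ K, IsPartialKMultiplex (SdSet op e 2) k l K := by
  classical
  obtain ⟨A, -, hA⟩ := Finset.exists_subset_card_eq (s := (Finset.univ : Finset (Fin n)))
    (by simpa using hln)
  set σ : Fin n → Fin n := fun a => (Equiv.ofBijective _ (hop a).1).symm e with hσ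
  have hσprop : ∀ a, op a (σ a) = e := fun a =>
    (Equiv.ofBijective _ (hop a).1).apply_symm_apply e
  have hσinj : Function.Injective σ := by
    intro a b hab
    have : op a (σ a) = op b (σ a) := by rw [hσprop a, hab, hσprop b]
    exact (hop (σ a)).2.1 this
  have hσsurj : Function.Surjective σ := Finite.surjective_of_injective hσinj
  set f : Fin n → (Fin 2 → Fin n) := fun a => ![a, σ a] with hf
  refine ⟨k • (A.val.map f), ?_, ?_, ?_⟩
  · simp [hA, mul_comm]
  · intro x hx
    rw [Multiset.mem_nsmul] at hx
    · obtain ⟨a, -, rfl⟩ := Multiset.mem_map.1 hx.2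
      show leftProd op e (List.ofFn ![a, σ a]) = e
      simp [leftProd, List.ofFn_succ, hσprop a]
  · intro j v
    rw [aux_filter_nsmul, Multiset.card_nsmul, Multiset.filter_map, Multiset.card_map]
    refine Fin.cases ?_ (fun i => ?_) j
    · -- coordinate 0 : f a 0 = a
      have : (A.val.filter ((fun x => x 0 = v) ∘ f)) = A.val.filter (fun a => a = v) := by
        apply Multiset.filter_congr; intro a _; simp [hf]
      rw [this]
      by_cases hv : v ∈ A
      · left
        have : A.val.filter (fun a => a = v) = {v} := by
          rw [Multiset.filter_eq']
          simp [Multiset.count_eq_one_of_mem A.nodup hv]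
        rw [this]; simp
      · right
        have : A.val.filter (fun a => a = v) = 0 := by
          rw [Multiset.filter_eq']
          simp [Multiset.count_eq_zero_of_notMem hv]
        rw [this]; simp
    · -- coordinate 1 : f a 1 = σ a
      obtain ⟨w, rfl⟩ := hσsurj v
      have hi : i = 0 := Subsingleton.elim i 0
      subst hi
      have : (A.val.filter ((fun x => x (Fin.succ 0) = σ w) ∘ f)) = A.val.filter (fun a => a = w) := by
        apply Multiset.filter_congr; intro a _
        simp only [Function.comp, hf]
        show (![a, σ a] (Fin.succ 0) = σ w) ↔ a = w
        constructor
        · intro hx; exact hσinj (by simpa using hx)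
        · intro hx; subst hx; simp
      rw [this]
      by_cases hv : w ∈ A
      · left
        have : A.val.filter (fun a => a = w) = {w} := by
          rw [Multiset.filter_eq']
          simp [Multiset.count_eq_one_of_mem A.nodup hv]
        rw [this]; simp
      · right
        have : A.val.filter (fun a => a = w) = 0 := by
          rw [Multiset.filter_eq']
          simp [Multiset.count_eq_zero_of_notMem hv]
        rw [this]; simp

/-- For a binary quasigroup `op` of order `n`, `k ≥ 1` and
`1 ≤ l ≤ n`: for every even `d ≥ 2` there is a partial `k`-multiplex of length `l`
over `S_d(G)`, and if one exists over `S_{d'}(G)` for some odd `d'`, then one exists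
over `S_d(G)` for every `d ≥ d'`. -/
theorem partial_multiplex_existence {n : ℕ} (op : Fin n → Fin n → Fin n) (e : Fin n)
    (hop : ∀ a : Fin n, Function.Bijective (op a) ∧ Function.Bijective (fun x => op x a))
    (k l : ℕ) (hk : 1 ≤ k) (hl : 1 ≤ l) (hln : l ≤ n) :
    (∀ d : ℕ, 2 ≤ d → Even d → ∃ K, IsPartialKMultiplex (SdSet op e d) k l K) ∧
    (∀ d' : ℕ, Odd d' → (∃ K, IsPartialKMultiplex (SdSet op e d') k l K) →
      ∀ d : ℕ, d' ≤ d → ∃ K, IsPartialKMultiplex (SdSet op e d) k l K) := by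
  classical
  -- step by 2 from any d ≥ 1
  have step2 : ∀ d : ℕ, 1 ≤ d → (∃ K, IsPartialKMultiplex (SdSet op e d) k l K) →
      ∃ K, IsPartialKMultiplex (SdSet op e (d + 2)) k l K := by
    intro d hd ⟨K, hK⟩
    obtain ⟨m, rfl⟩ : ∃ m, d = m + 1 := ⟨d - 1, by omega⟩
    exact aux_step op e hop k l m K hK
  have steps : ∀ (t d : ℕ), 1 ≤ d → (∃ K, IsPartialKMultiplex (SdSet op e d) k l K) →
      ∃ K, IsPartialKMultiplex (SdSet op e (d + 2 * t)) k l K := by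
    intro t
    induction t with
    | zero => intro d _ hK; simpa using hK
    | succ s ih =>
      intro d hd hK
      have := ih (d + 2) (by omega) (step2 d hd hK)
      have heq : d + 2 + 2 * s = d + 2 * (s + 1) := by ring
      rwa [heq] at this
  have evenCase : ∀ d : ℕ, 2 ≤ d → Even d → ∃ K, IsPartialKMultiplex (SdSet op e d) k l K := by
    intro d hd2 hdE
    obtain ⟨t, ht⟩ : ∃ t, d = 2 + 2 * t := by
      obtain ⟨r, hr⟩ := hdE
      exact ⟨r - 1, by omega⟩
    subst ht
    exact steps t 2 (by norm_num) (aux_base op e hop k l hln)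
  refine ⟨evenCase, ?_⟩
  intro d' hd' hEx d hdd
  rcases Nat.even_or_odd d with hE | hO
  · refine evenCase d ?_ hE
    have hd'1 : 1 ≤ d' := hd'.pos
    obtain ⟨r, hr⟩ := hE
    omega
  · obtain ⟨t, ht⟩ : ∃ t, d = d' + 2 * t := by
      obtain ⟨r, hr⟩ := hd'
      obtain ⟨s, hs⟩ := hO
      exact ⟨s - r, by omega⟩
    subst ht
    exact steps t d' hd'.pos hEx
end
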